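/- arXiv:2203.01067 — 7 statements merged into one kernel-verified Lean document; each statement's English description precedes it below -/
import Mathlib

section
/- Let R be a ring, 𝓛 a class of left R-modules, M an exact chain complex of left R-modules that is Hom_R(−,𝓛)-exact, and N a bounded above complex. If for every n ∈ ℤ every R-linear map Z_{n-1}(M) → N_n factors through some module in 𝓛, then every chain map f : M → N is null-homotopic via a homotopy (s_n : M_n → N_{n+1})_{n∈ℤ} satisfying f_n = d^N_{n+1} ∘ s_n + s_{n-1} ∘ d^M_n for all n, in which each s_n factors through some module belonging to 𝓛. -/
open CategoryTheory CategoryTheory.Limits ZeroObject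

universe u

/-- The category `C(R)` of `ℤ`-indexed chain complexes of left `R`-modules. -/
abbrev Cx (R : Type u) [Ring R] := ChainComplex (ModuleCat.{u} R) ℤ

variable {R : Type u} [Ring R]

/-- A morphism factors through a projective object. -/
def FactorsThroughProjective {C : Type*} [Category C] {X Y : C} (f : X ⟶ Y) : Prop :=
  ∃ (P : C) (g : X ⟶ P) (h : P ⟶ Y), Projective P ∧ g ≫ h = f

/-- `N` belongs to the subprojectivity domain of `M`, i.e. every morphism `M ⟶ N`
factors through a projective object. -/
def InSubprojDomain {C : Type*} [Category C] (M N : C) : Prop :=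
  ∀ f : M ⟶ N, FactorsThroughProjective f

/-- A morphism factors through a module belonging to the class `𝓛`. -/
def FactorsThroughClass (𝓛 : Set (ModuleCat.{u} R)) {A B : ModuleCat.{u} R} (f : A ⟶ B) : Prop :=
  ∃ L ∈ 𝓛, ∃ (g : A ⟶ L) (h : L ⟶ B), g ≫ h = f

/-- The `n`-th cycles module `Z_n(X) = ker (d_n : X_n ⟶ X_{n-1})` of a complex. -/
def cyclesAt (X : Cx R) (n : ℤ) : ModuleCat.{u} R :=
  ModuleCat.of R (LinearMap.ker (X.d n (n - 1)).hom)

/-- A complex is exact if it has zero homology in every degree. -/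
def IsExactCx (X : Cx R) : Prop := ∀ n : ℤ, X.ExactAt n

/-- A complex is bounded above if `X_n = 0` for all `n` at least some bound. -/
def BoundedAbove (X : Cx R) : Prop := ∃ b : ℤ, ∀ n, b ≤ n → IsZero (X.X n)

/-- A complex is bounded below if `X_n = 0` for all `n` at most some bound. -/
def BoundedBelow (X : Cx R) : Prop := ∃ b : ℤ, ∀ n, n ≤ b → IsZero (X.X n)

/-- A complex is bounded if `X_n = 0` outside finitely many degrees. -/
def BoundedCx (X : Cx R) : Prop := BoundedAbove X ∧ BoundedBelow X

/-- A chain map `f : M ⟶ N` is null-homotopic: there are maps `s_n : M_n ⟶ N_{n+1}`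
with `f_n = d^N_{n+1} ∘ s_n + s_{n-1} ∘ d^M_n` for all `n`. -/
def NullHomotopic {M N : Cx R} (f : M ⟶ N) : Prop :=
  ∃ s : ∀ i j : ℤ, M.X i ⟶ N.X j,
    ∀ n : ℤ, f.f n = s n (n + 1) ≫ N.d (n + 1) n + M.d n (n - 1) ≫ s (n - 1) n

/-- The complex `M̄[n]`, with `M` in degrees `n+1` and `n`, identity differential
between them, and `0` elsewhere. -/
noncomputable def doubleCx (M : ModuleCat.{u} R) (n : ℤ) : Cx R where
  X i := if i = n + 1 ∨ i = n then M else 0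
  d i j :=
    if h : i = n + 1 ∧ j = n then
      eqToHom (if_pos (Or.inl h.1)) ≫ eqToHom (if_pos (Or.inr h.2)).symm
    else 0
  shape i j hij := by
    try dsimp only
    rw [dif_neg]
    rintro ⟨rfl, rfl⟩
    exact hij (by simp)
  d_comp_d' i j k _ _ := by
    try dsimp only
    by_cases h1 : i = n + 1 ∧ j = n
    · rw [dif_neg (show ¬(j = n + 1 ∧ k = n) by omega), comp_zero]
    · rw [dif_neg h1, zero_comp]

/-- The shifted complex `X[k]`, with `X[k]_i = X_{i-k}` and differential `(-1)^k d`. -/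
noncomputable def shiftCx (X : Cx R) (k : ℤ) : Cx R where
  X i := X.X (i - k)
  d i j := (Int.negOnePow k) • X.d (i - k) (j - k)
  shape i j hij := by
    try dsimp only
    rw [X.shape (i - k) (j - k)
      (by simp only [ComplexShape.down_Rel] at hij ⊢; omega), smul_zero]
  d_comp_d' i j l _ _ := by
    try dsimp only
    simp only [Linear.comp_units_smul, Linear.units_smul_comp,
      HomologicalComplex.d_comp_d, smul_zero]

/-- The class `#𝓛` of complexes all of whose components lie in `𝓛`. -/
def hashClass (𝓛 : Set (ModuleCat.{u} R)) : Set (Cx R) := {X | ∀ n : ℤ, X.X n ∈ 𝓛}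

/-- The class `𝓛̃` of exact complexes with all cycles in `𝓛`. -/
def tildeClass (𝓛 : Set (ModuleCat.{u} R)) : Set (Cx R) :=
  {X | IsExactCx X ∧ ∀ n : ℤ, cyclesAt X n ∈ 𝓛}

/-- `F` is a flat module: every short exact sequence ending in `F` is pure, i.e.
every morphism from a finitely presented module to `F` lifts along any surjection onto `F`. -/
def IsFlatMod (F : ModuleCat.{u} R) : Prop :=
  ∀ (B : ModuleCat.{u} R) (g : B ⟶ F), Function.Surjective g →
    ∀ (P : ModuleCat.{u} R), Module.FinitePresentation R P →
      ∀ f : P ⟶ F, ∃ h : P ⟶ B, h ≫ g = f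

/-- helper lemmas -/
lemma exact_range_eq_ker (M : Cx R) (hM : IsExactCx M) (n : ℤ) :
    LinearMap.range (M.d (n + 1) n).hom = LinearMap.ker (M.d n (n - 1)).hom := by
  have h := (HomologicalComplex.exactAt_iff' M (n + 1) n (n - 1)
    (ChainComplex.prev ℤ n) (ChainComplex.next ℤ n)).1 (hM n)
  exact (ShortComplex.moduleCat_exact_iff_range_eq_ker _).1 h

lemma step_lemma (𝓛 : Set (ModuleCat.{u} R)) (M N : Cx R) (hM : IsExactCx M)
    (hMhom : ∀ L ∈ 𝓛, ∀ n : ℤ, ∀ f : M.X n ⟶ L, M.d (n + 1) n ≫ f = 0 →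
      ∃ g : M.X (n - 1) ⟶ L, M.d n (n - 1) ≫ g = f)
    (hfac : ∀ n : ℤ, ∀ f : cyclesAt M (n - 1) ⟶ N.X n, FactorsThroughClass 𝓛 f)
    (n : ℤ) (g : M.X (n + 1) ⟶ N.X (n + 1)) (hg : M.d (n + 1 + 1) (n + 1) ≫ g = 0) :
    ∃ t : M.X n ⟶ N.X (n + 1), M.d (n + 1) n ≫ t = g ∧ FactorsThroughClass 𝓛 t := by
  have h1 : LinearMap.range (M.d (n + 1) n).hom = LinearMap.ker (M.d n (n - 1)).hom :=
    exact_range_eq_ker M hM n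
  have h2 : LinearMap.range (M.d (n + 1 + 1) (n + 1)).hom = LinearMap.ker (M.d (n + 1) n).hom := by
    have h := exact_range_eq_ker M hM (n + 1)
    rwa [show (n + 1 - 1 : ℤ) = n by omega] at h
  let K := LinearMap.ker (M.d n (n - 1)).hom
  have hfac' : ∀ φ : ModuleCat.of R K ⟶ N.X (n + 1), FactorsThroughClass 𝓛 φ := by
    have h := hfac (n + 1)
    rw [show (n + 1 - 1 : ℤ) = n by omega] at h
    exact h
  have hMhom' : ∀ L ∈ 𝓛, ∀ φ : M.X (n + 1) ⟶ L, M.d (n + 1 + 1) (n + 1) ≫ φ = 0 →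
      ∃ ψ : M.X n ⟶ L, M.d (n + 1) n ≫ ψ = φ := by
    intro L hL
    have h := hMhom L hL (n + 1)
    rwa [show (n + 1 - 1 : ℤ) = n by omega] at h
  have hmem : ∀ x : M.X (n + 1), M.d (n + 1) n x ∈ K := by
    intro x
    show M.d (n + 1) n x ∈ LinearMap.ker (M.d n (n - 1)).hom
    rw [← h1]
    exact ⟨x, rfl⟩
  let dcor : M.X (n + 1) →ₗ[R] K := (M.d (n + 1) n).hom.codRestrict K hmem
  have hdcor_surj : Function.Surjective dcor := by
    rintro ⟨y, hy⟩
    have hy2 : y ∈ LinearMap.range (M.d (n + 1) n).hom := by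
      have hy' : y ∈ LinearMap.ker (M.d n (n - 1)).hom := hy
      rwa [← h1] at hy'
    obtain ⟨x, hx⟩ := hy2
    exact ⟨x, Subtype.ext hx⟩
  have hker : LinearMap.ker dcor ≤ LinearMap.ker g.hom := by
    intro x hx
    have hx' : M.d (n + 1) n x = 0 := congrArg Subtype.val (LinearMap.mem_ker.1 hx)
    have hx2 : x ∈ LinearMap.range (M.d (n + 1 + 1) (n + 1)).hom := by
      rw [h2]; exact LinearMap.mem_ker.2 hx'
    obtain ⟨y, rfl⟩ := hx2
    show g (M.d (n + 1 + 1) (n + 1) y) = 0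
    have := congrArg (fun φ => φ.hom y) hg
    simpa using this
  let q : (M.X (n + 1) ⧸ LinearMap.ker dcor) →ₗ[R] N.X (n + 1) :=
    Submodule.liftQ (LinearMap.ker dcor) g.hom hker
  let e := dcor.quotKerEquivOfSurjective hdcor_surj
  let gbar : K →ₗ[R] N.X (n + 1) := q.comp (e.symm : K →ₗ[R] (M.X (n + 1) ⧸ LinearMap.ker dcor))
  have hgbar : ∀ x : M.X (n + 1), gbar (dcor x) = g x := by
    intro x
    have he : e (Submodule.Quotient.mk x) = dcor x := rfl
    have : gbar (dcor x) = q (e.symm (dcor x)) := rfl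
    rw [this, ← he, e.symm_apply_apply]
    exact Submodule.liftQ_apply _ _ _
  obtain ⟨L, hL, u, v, huv⟩ := hfac' (ModuleCat.ofHom gbar : ModuleCat.of R K ⟶ N.X (n + 1))
  let φ : M.X (n + 1) ⟶ L := (show M.X (n + 1) ⟶ ModuleCat.of R K from ModuleCat.ofHom dcor) ≫ u
  have hφ : M.d (n + 1 + 1) (n + 1) ≫ φ = 0 := by
    ext x
    show u (dcor (M.d (n + 1 + 1) (n + 1) x)) = 0
    have hd0 : dcor (M.d (n + 1 + 1) (n + 1) x) = 0 := by
      apply Subtype.ext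
      show M.d (n + 1) n (M.d (n + 1 + 1) (n + 1) x) = 0
      exact congrArg (fun φ => φ.hom x) (M.d_comp_d (n + 1 + 1) (n + 1) n)
    rw [hd0, map_zero]
  obtain ⟨ψ, hψ⟩ := hMhom' L hL φ hφ
  refine ⟨ψ ≫ v, ?_, L, hL, ψ, v, rfl⟩
  rw [← Category.assoc, hψ]
  ext x
  show (u ≫ v) (dcor x) = g x
  rw [huv]
  exact hgbar x


/-- Lemma 2.1. -/
theorem stmt0 (R : Type u) [Ring R] (𝓛 : Set (ModuleCat.{u} R)) (M N : Cx R)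
    (hM : IsExactCx M)
    (hMhom : ∀ L ∈ 𝓛, ∀ n : ℤ, ∀ f : M.X n ⟶ L, M.d (n + 1) n ≫ f = 0 →
      ∃ g : M.X (n - 1) ⟶ L, M.d n (n - 1) ≫ g = f)
    (hN : BoundedAbove N)
    (hfac : ∀ n : ℤ, ∀ f : cyclesAt M (n - 1) ⟶ N.X n, FactorsThroughClass 𝓛 f) :
    ∀ f : M ⟶ N, ∃ s : ∀ i j : ℤ, M.X i ⟶ N.X j,
      (∀ n : ℤ, f.f n = s n (n + 1) ≫ N.d (n + 1) n + M.d n (n - 1) ≫ s (n - 1) n) ∧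
      (∀ n : ℤ, FactorsThroughClass 𝓛 (s n (n + 1))) := by
  obtain ⟨b, hb⟩ := hN
  intro f
  obtain ⟨L₀, hL₀, -⟩ := hfac 0 0
  have hzero : ∀ (A B : ModuleCat.{u} R), FactorsThroughClass 𝓛 (0 : A ⟶ B) :=
    fun A B => ⟨L₀, hL₀, 0, 0, by simp⟩
  have step : ∀ (n : ℤ) (g : M.X (n + 1) ⟶ N.X (n + 1)), ∃ t : M.X n ⟶ N.X (n + 1),
      M.d (n + 1 + 1) (n + 1) ≫ g = 0 →
        (M.d (n + 1) n ≫ t = g ∧ FactorsThroughClass 𝓛 t) := by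
    intro n g
    by_cases h : M.d (n + 1 + 1) (n + 1) ≫ g = 0
    · obtain ⟨t, h1, h2⟩ := step_lemma 𝓛 M N hM hMhom hfac n g h
      exact ⟨t, fun _ => ⟨h1, h2⟩⟩
    · exact ⟨0, fun h' => absurd h' h⟩
  choose T hT using step
  let G : ℕ → ∀ i j : ℤ, (M.X i ⟶ N.X j) :=
    Nat.rec (motive := fun _ => ∀ i j : ℤ, (M.X i ⟶ N.X j)) (fun _ _ => 0)
      (fun k Gk i j =>
        if h : j = i + 1 then
          if i = b - 2 - (k : ℤ) then
            T i (f.f (i + 1) - Gk (i + 1) (i + 1 + 1) ≫ N.d (i + 1 + 1) (i + 1)) ≫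
              eqToHom (congrArg N.X h.symm)
          else Gk i j
        else Gk i j)
  have hG0 : ∀ i j, G 0 i j = 0 := fun _ _ => rfl
  have hGsucc : ∀ (k : ℕ) (i j : ℤ), G (k + 1) i j =
      if h : j = i + 1 then
        if i = b - 2 - (k : ℤ) then
          T i (f.f (i + 1) - G k (i + 1) (i + 1 + 1) ≫ N.d (i + 1 + 1) (i + 1)) ≫
            eqToHom (congrArg N.X h.symm)
        else G k i j
      else G k i j := fun _ _ _ => rfl
  have hGeval : ∀ (k : ℕ) (i : ℤ), G (k + 1) i (i + 1) =
      if i = b - 2 - (k : ℤ) then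
        T i (f.f (i + 1) - G k (i + 1) (i + 1 + 1) ≫ N.d (i + 1 + 1) (i + 1))
      else G k i (i + 1) := by
    intro k i
    rw [hGsucc, dif_pos rfl]
    split
    · simp
    · rfl
  have hGne : ∀ (k : ℕ) (i j : ℤ), i ≠ b - 2 - (k : ℤ) → G (k + 1) i j = G k i j := by
    intro k i j h
    rw [hGsucc]
    split <;> simp [h]
  have hf0 : ∀ n : ℤ, b ≤ n → f.f n = 0 := fun n hn => (hb n hn).eq_of_tgt _ _
  have inv : ∀ k : ℕ,
      (∀ i j : ℤ, i ≤ b - 2 - (k : ℤ) → G k i j = 0) ∧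
      (∀ n : ℤ, b - 2 - (k : ℤ) ≤ n →
        M.d (n + 1 + 1) (n + 1) ≫
          (f.f (n + 1) - G k (n + 1) (n + 1 + 1) ≫ N.d (n + 1 + 1) (n + 1)) = 0) ∧
      (∀ n : ℤ, b - 2 - (k : ℤ) ≤ n → FactorsThroughClass 𝓛 (G k n (n + 1))) ∧
      (∀ n : ℤ, b - 1 - (k : ℤ) ≤ n →
        f.f (n + 1) = G k (n + 1) (n + 1 + 1) ≫ N.d (n + 1 + 1) (n + 1) +
          M.d (n + 1) n ≫ G k n (n + 1)) := by
    intro k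
    induction k with
    | zero =>
      refine ⟨fun i j _ => hG0 i j, ?_, ?_, ?_⟩
      · intro n hn
        rw [hG0, zero_comp, sub_zero, ← f.comm, hf0 (n + 1 + 1) (by omega), zero_comp]
      · intro n hn
        rw [hG0]
        exact hzero _ _
      · intro n hn
        rw [hG0, hG0, zero_comp, comp_zero, add_zero]
        exact hf0 (n + 1) (by omega)
    | succ k ih =>
      obtain ⟨ID, IA, IB, IC⟩ := ih
      have key : ∀ i : ℤ, i = b - 2 - (k : ℤ) →
          M.d (i + 1) i ≫ G (k + 1) i (i + 1) =
            f.f (i + 1) - G k (i + 1) (i + 1 + 1) ≫ N.d (i + 1 + 1) (i + 1) ∧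
          FactorsThroughClass 𝓛 (G (k + 1) i (i + 1)) := by
        intro i hi
        rw [hGeval, if_pos hi]
        exact hT i _ (IA i (by omega))
      refine ⟨?_, ?_, ?_, ?_⟩
      · intro i j hi
        push_cast at hi
        rw [hGne k i j (by omega)]
        exact ID i j (by omega)
      · intro n hn
        push_cast at hn
        by_cases hcase : n + 1 = b - 2 - (k : ℤ)
        · obtain ⟨hd, -⟩ := key (n + 1) hcase
          rw [Preadditive.comp_sub, ← Category.assoc, hd, Preadditive.sub_comp, Category.assoc,
            HomologicalComplex.d_comp_d, comp_zero, sub_zero, ← f.comm, sub_self]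
        · rw [hGne k (n + 1) (n + 1 + 1) hcase]
          exact IA n (by omega)
      · intro n hn
        push_cast at hn
        by_cases hcase : n = b - 2 - (k : ℤ)
        · exact (key n hcase).2
        · rw [hGne k n (n + 1) hcase]
          by_cases h2 : b - 2 - (k : ℤ) ≤ n
          · exact IB n h2
          · rw [ID n (n + 1) (by omega)]
            exact hzero _ _
      · intro n hn
        push_cast at hn
        rw [hGne k (n + 1) (n + 1 + 1) (by omega)]
        by_cases hcase : n = b - 2 - (k : ℤ)
        · rw [(key n hcase).1]
          abel
        · rw [hGne k n (n + 1) hcase]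
          exact IC n (by omega)
  have stab : ∀ (i j : ℤ) (k k' : ℕ), k ≤ k' → b - 2 - (k : ℤ) < i → G k' i j = G k i j := by
    intro i j k k' hkk hi
    induction k' with
    | zero =>
      have : k = 0 := Nat.le_zero.1 hkk
      subst this; rfl
    | succ k' ih =>
      by_cases h : k ≤ k'
      · have hk : (k : ℤ) ≤ (k' : ℤ) := by exact_mod_cast h
        rw [hGne k' i j (by omega), ih h]
      · have : k = k' + 1 := by omega
        subst this; rfl
  refine ⟨fun i j => G (b - 1 - i).toNat i j, ?_, ?_⟩
  · intro n
    have h1 : G (b - 1 - n).toNat n (n + 1) = G (b - n).toNat n (n + 1) :=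
      (stab n (n + 1) (b - 1 - n).toNat (b - n).toNat
        (Int.toNat_le_toNat (by omega)) (by omega)).symm
    have h2 : (b - 1 - (n - 1)).toNat = (b - n).toNat := by
      congr 1; omega
    have hIC := (inv (b - n).toNat).2.2.2 (n - 1) (by omega)
    rw [show n - 1 + 1 = n by omega] at hIC
    show f.f n = G (b - 1 - n).toNat n (n + 1) ≫ N.d (n + 1) n +
      M.d n (n - 1) ≫ G (b - 1 - (n - 1)).toNat (n - 1) n
    rw [h1, h2]
    exact hIC
  · intro n
    exact (inv (b - 1 - n).toNat).2.2.1 n (by omega)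
end

section
/- Let R be a ring, n ∈ ℤ, N a chain complex of left R-modules and M a left R-module. Then N ∈ Pr⁻¹_C(M̄[n]) if and only if N_{n+1} ∈ Pr⁻¹_Mod(M). -/
open CategoryTheory CategoryTheory.Limits ZeroObject

universe u

variable {R : Type u} [Ring R]

section Stmt2Aux

variable {R : Type u} [Ring R]

lemma doubleCx_X_eq (A : ModuleCat.{u} R) (m i : ℤ) (h : i = m + 1 ∨ i = m) :
    (doubleCx A m).X i = A := if_pos h

lemma doubleCx_X_isZero (A : ModuleCat.{u} R) (m i : ℤ) (h : ¬(i = m + 1 ∨ i = m)) :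
    IsZero ((doubleCx A m).X i) :=
  (isZero_zero _).of_iso (eqToIso (if_neg h : (doubleCx A m).X i = 0))

lemma doubleCx_d_eq (A : ModuleCat.{u} R) (m : ℤ) :
    (doubleCx A m).d (m + 1) m =
      eqToHom (doubleCx_X_eq A m (m + 1) (Or.inl rfl)) ≫
        eqToHom (doubleCx_X_eq A m m (Or.inr rfl)).symm :=
  dif_pos ⟨rfl, rfl⟩

lemma doubleCx_d_eq_zero (A : ModuleCat.{u} R) (m i j : ℤ) (h : ¬(i = m + 1 ∧ j = m)) :
    (doubleCx A m).d i j = 0 :=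
  dif_neg h

/-- The chain map `Ā[m] ⟶ X` corresponding to `f : A ⟶ X_{m+1}`. -/
noncomputable def fromDouble {A : ModuleCat.{u} R} {X : Cx R} (m : ℤ) (f : A ⟶ X.X (m + 1)) :
    doubleCx A m ⟶ X where
  f i :=
    if h1 : i = m + 1 then
      eqToHom (doubleCx_X_eq A m i (Or.inl h1)) ≫ f ≫ eqToHom (congrArg X.X h1.symm)
    else if h2 : i = m then
      eqToHom (doubleCx_X_eq A m i (Or.inr h2)) ≫ f ≫ X.d (m + 1) m ≫
        eqToHom (congrArg X.X h2.symm)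
    else 0
  comm' i j hij := by
    simp only [ComplexShape.down_Rel] at hij
    beta_reduce
    by_cases h1 : i = m + 1
    · subst h1
      have hj : j = m := by omega
      subst hj
      rw [dif_pos rfl, dif_neg (by omega : ¬ (j : ℤ) = j + 1), dif_pos rfl, doubleCx_d_eq]
      simp
    · by_cases h2 : i = m
      · subst h2
        rw [dif_neg h1, dif_pos rfl, doubleCx_d_eq_zero A i i j (by omega), zero_comp]
        simp
      · rw [dif_neg h1, dif_neg h2, zero_comp,
          doubleCx_d_eq_zero A m i j (by omega), zero_comp]

lemma fromDouble_f_top {A : ModuleCat.{u} R} {X : Cx R} (m : ℤ) (f : A ⟶ X.X (m + 1)) :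
    (fromDouble m f).f (m + 1) = eqToHom (doubleCx_X_eq A m (m + 1) (Or.inl rfl)) ≫ f := by
  simp [fromDouble]

lemma fromDouble_f_bot {A : ModuleCat.{u} R} {X : Cx R} (m : ℤ) (f : A ⟶ X.X (m + 1)) :
    (fromDouble m f).f m =
      eqToHom (doubleCx_X_eq A m m (Or.inr rfl)) ≫ f ≫ X.d (m + 1) m := by
  rw [show (fromDouble m f).f m = _ from dif_neg (by omega : ¬ (m : ℤ) = m + 1)]
  rw [dif_pos rfl]
  simp

/-- The chain map `X ⟶ Ā[m]` corresponding to `f : X_m ⟶ A`. -/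
noncomputable def toDouble {A : ModuleCat.{u} R} {X : Cx R} (m : ℤ) (f : X.X m ⟶ A) :
    X ⟶ doubleCx A m where
  f i :=
    if h1 : i = m + 1 then
      eqToHom (congrArg X.X h1) ≫ X.d (m + 1) m ≫ f ≫
        eqToHom (doubleCx_X_eq A m i (Or.inl h1)).symm
    else if h2 : i = m then
      eqToHom (congrArg X.X h2) ≫ f ≫ eqToHom (doubleCx_X_eq A m i (Or.inr h2)).symm
    else 0
  comm' i j hij := by
    simp only [ComplexShape.down_Rel] at hij
    beta_reduce
    by_cases h1 : i = m + 1
    · subst h1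
      have hj : j = m := by omega
      subst hj
      rw [dif_pos rfl, dif_neg (by omega : ¬ (j : ℤ) = j + 1), dif_pos rfl, doubleCx_d_eq]
      simp
    · rw [doubleCx_d_eq_zero A m i j (fun hh => h1 hh.1), comp_zero]
      by_cases h2 : j = m + 1
      · subst h2
        rw [dif_pos rfl]
        simp [X.d_comp_d_assoc]
      · by_cases h3 : j = m
        · omega
        · rw [dif_neg h2, dif_neg h3, comp_zero]

lemma toDouble_f_bot {A : ModuleCat.{u} R} {X : Cx R} (m : ℤ) (f : X.X m ⟶ A) :
    (toDouble m f).f m = f ≫ eqToHom (doubleCx_X_eq A m m (Or.inr rfl)).symm := by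
  rw [show (toDouble m f).f m = _ from dif_neg (by omega : ¬ (m : ℤ) = m + 1)]
  rw [dif_pos rfl]
  simp

/-- The chain map `Ā[m] ⟶ B̄[m]` induced by `e : A ⟶ B`. -/
noncomputable def mapDouble {A B : ModuleCat.{u} R} (m : ℤ) (e : A ⟶ B) :
    doubleCx A m ⟶ doubleCx B m where
  f i :=
    if h : i = m + 1 ∨ i = m then
      eqToHom (doubleCx_X_eq A m i h) ≫ e ≫ eqToHom (doubleCx_X_eq B m i h).symm
    else 0
  comm' i j hij := by
    simp only [ComplexShape.down_Rel] at hij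
    beta_reduce
    by_cases h : i = m + 1 ∧ j = m
    · obtain ⟨h1, h2⟩ := h
      subst h1; subst h2
      rw [dif_pos (Or.inl rfl), dif_pos (Or.inr rfl), doubleCx_d_eq, doubleCx_d_eq]
      simp
    · rw [doubleCx_d_eq_zero A m i j h, doubleCx_d_eq_zero B m i j h, zero_comp, comp_zero]

lemma mapDouble_f {A B : ModuleCat.{u} R} (m : ℤ) (e : A ⟶ B) (i : ℤ)
    (h : i = m + 1 ∨ i = m) :
    (mapDouble m e).f i =
      eqToHom (doubleCx_X_eq A m i h) ≫ e ≫ eqToHom (doubleCx_X_eq B m i h).symm :=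
  dif_pos h

lemma epi_mapDouble {A B : ModuleCat.{u} R} (m : ℤ) (e : A ⟶ B) [Epi e] :
    Epi (mapDouble m e) := by
  constructor
  intro Z u v huv
  apply HomologicalComplex.hom_ext
  intro i
  by_cases h : i = m + 1 ∨ i = m
  · have : Epi ((mapDouble m e).f i) := by
      rw [mapDouble_f m e i h]
      infer_instance
    rw [← cancel_epi ((mapDouble m e).f i)]
    exact HomologicalComplex.congr_hom huv i
  · exact (doubleCx_X_isZero B m i h).eq_of_src _ _


/-- `P̄[m]` is a projective complex when `P` is a projective module. -/
lemma projective_doubleCx {P : ModuleCat.{u} R} (hP : Projective P) (m : ℤ) :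
    Projective (doubleCx P m) := by
  haveI := hP
  constructor
  intro E X fmap e he
  haveI : Epi (e.f (m + 1)) := inferInstance
  obtain ⟨l, hl⟩ := Projective.factors
    (eqToHom (doubleCx_X_eq P m (m + 1) (Or.inl rfl)).symm ≫ fmap.f (m + 1)) (e.f (m + 1))
  refine ⟨fromDouble m l, ?_⟩
  apply HomologicalComplex.hom_ext
  intro i
  by_cases h1 : i = m + 1
  · subst h1
    rw [HomologicalComplex.comp_f, fromDouble_f_top]
    rw [Category.assoc, hl]
    simp
  · by_cases h2 : i = m
    · subst h2
      rw [HomologicalComplex.comp_f, fromDouble_f_bot]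
      have he2 : e.f (i + 1) ≫ X.d (i + 1) i = E.d (i + 1) i ≫ e.f i := e.comm (i + 1) i
      have hf2 : fmap.f (i + 1) ≫ X.d (i + 1) i = (doubleCx P i).d (i + 1) i ≫ fmap.f i :=
        fmap.comm (i + 1) i
      calc (eqToHom (doubleCx_X_eq P i i (Or.inr rfl)) ≫ l ≫ E.d (i + 1) i) ≫ e.f i
          = eqToHom (doubleCx_X_eq P i i (Or.inr rfl)) ≫ l ≫ e.f (i + 1) ≫ X.d (i + 1) i := by
            rw [he2]; simp
        _ = eqToHom (doubleCx_X_eq P i i (Or.inr rfl)) ≫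
              (eqToHom (doubleCx_X_eq P i (i + 1) (Or.inl rfl)).symm ≫ fmap.f (i + 1)) ≫
                X.d (i + 1) i := by
            rw [← hl]; simp
        _ = fmap.f i := by
            rw [Category.assoc, hf2, doubleCx_d_eq]
            simp
    · exact (doubleCx_X_isZero P m i (by tauto)).eq_of_src _ _

/-- A component of a projective complex is a projective module. -/
lemma projective_component {Q : Cx R} (hQ : Projective Q) (m : ℤ) :
    Projective (Q.X m) := by
  haveI := hQ
  constructor
  intro E X f e he
  haveI : Epi (mapDouble m e) := epi_mapDouble m e
  obtain ⟨L, hL⟩ := Projective.factors (toDouble m f) (mapDouble m e)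
  refine ⟨L.f m ≫ eqToHom (doubleCx_X_eq E m m (Or.inr rfl)), ?_⟩
  have h1 : L.f m ≫ (mapDouble m e).f m = (toDouble m f).f m :=
    HomologicalComplex.congr_hom hL m
  rw [mapDouble_f m e m (Or.inr rfl), toDouble_f_bot] at h1
  have := congrArg (fun φ => φ ≫ eqToHom (doubleCx_X_eq X m m (Or.inr rfl))) h1
  simpa using this
end Stmt2Aux

/-- Lemma 2.3. -/
theorem stmt2 (R : Type u) [Ring R] (n : ℤ) (N : Cx R) (M : ModuleCat.{u} R) :
    InSubprojDomain (doubleCx M n) N ↔ InSubprojDomain M (N.X (n + 1)) := by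
  constructor
  · intro H f
    obtain ⟨Q, G, K, hQ, hcomp⟩ := H (fromDouble n f)
    refine ⟨Q.X (n + 1), eqToHom (doubleCx_X_eq M n (n + 1) (Or.inl rfl)).symm ≫ G.f (n + 1),
      K.f (n + 1), projective_component hQ (n + 1), ?_⟩
    have h1 : G.f (n + 1) ≫ K.f (n + 1) = (fromDouble n f).f (n + 1) :=
      HomologicalComplex.congr_hom hcomp (n + 1)
    rw [fromDouble_f_top] at h1
    rw [Category.assoc, h1]
    simp
  · intro H F
    obtain ⟨P, g, h, hP, hgh⟩ :=
      H (eqToHom (doubleCx_X_eq M n (n + 1) (Or.inl rfl)).symm ≫ F.f (n + 1))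
    refine ⟨doubleCx P n, mapDouble n g, fromDouble n h, projective_doubleCx hP n, ?_⟩
    apply HomologicalComplex.hom_ext
    intro i
    by_cases h1 : i = n + 1
    · subst h1
      rw [HomologicalComplex.comp_f, mapDouble_f n g (n + 1) (Or.inl rfl), fromDouble_f_top]
      simp only [Category.assoc, eqToHom_trans_assoc, eqToHom_refl, Category.id_comp]
      rw [hgh]
      simp
    · by_cases h2 : i = n
      · subst h2
        rw [HomologicalComplex.comp_f, mapDouble_f i g i (Or.inr rfl), fromDouble_f_bot]
        have hF : F.f (i + 1) ≫ N.d (i + 1) i = (doubleCx M i).d (i + 1) i ≫ F.f i :=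
          F.comm (i + 1) i
        rw [doubleCx_d_eq] at hF
        simp only [Category.assoc, eqToHom_trans_assoc, eqToHom_refl, Category.id_comp]
        rw [reassoc_of% hgh]
        simp only [Category.assoc, eqToHom_trans_assoc]
        rw [hF]
        simp
      · exact (doubleCx_X_isZero M n i (by tauto)).eq_of_src _ _
end

section
/- Let R be a ring, N an exact chain complex of left R-modules and M a bounded below complex. If Z_n(N) ∈ Pr⁻¹_Mod(M_n) for every n ∈ ℤ, then N ∈ Pr⁻¹_C(M). -/
open CategoryTheory CategoryTheory.Limits ZeroObject

universe u

variable {R : Type u} [Ring R]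

namespace Stmt5Aux

lemma step (N : Cx R) (hN : IsExactCx N) {A : ModuleCat.{u} R} (n : ℤ)
    (hsub : InSubprojDomain A (cyclesAt N n)) (u : A ⟶ N.X n)
    (hu : u ≫ N.d n (n - 1) = 0) :
    ∃ (Q : ModuleCat.{u} R) (s : A ⟶ Q) (t : Q ⟶ N.X (n + 1)),
      Projective Q ∧ s ≫ t ≫ N.d (n + 1) n = u := by
  have hexact : ∀ x : N.X n, N.d n (n - 1) x = 0 → ∃ y : N.X (n + 1), N.d (n + 1) n y = x := by
    have h1 := hN n
    rw [N.exactAt_iff' (n + 1) n (n - 1)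
      (ComplexShape.prev_eq' _ (ComplexShape.down_mk (n+1) n rfl))
      (ComplexShape.next_eq' _ (ComplexShape.down_mk n (n-1) (by omega)))] at h1
    exact (ShortComplex.moduleCat_exact_iff _).mp h1
  let ι : cyclesAt N n ⟶ N.X n := ModuleCat.ofHom (LinearMap.ker (N.d n (n - 1)).hom).subtype
  let π : N.X (n + 1) ⟶ cyclesAt N n :=
    ModuleCat.ofHom (LinearMap.codRestrict _ (N.d (n + 1) n).hom (fun y => by
      simp only [LinearMap.mem_ker]
      exact congrArg (fun g => g.hom y) (N.d_comp_d (n + 1) n (n - 1))))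
  haveI : Epi π := by
    rw [ModuleCat.epi_iff_surjective]
    rintro ⟨x, hx⟩
    obtain ⟨y, hy⟩ := hexact x hx
    exact ⟨y, Subtype.ext hy⟩
  obtain ⟨P, g, h', hP, hfac⟩ := hsub (ModuleCat.ofHom (LinearMap.codRestrict _ u.hom (fun a => by
    simp only [LinearMap.mem_ker]
    exact congrArg (fun g => g.hom a) hu)))
  haveI := hP
  refine ⟨P, g, Projective.factorThru h' π, hP, ?_⟩
  have h2 : π ≫ ι = N.d (n + 1) n := ModuleCat.hom_ext (LinearMap.subtype_comp_codRestrict _ _ _)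
  have h3 : Projective.factorThru h' π ≫ π = h' := Projective.factorThru_comp h' π
  calc g ≫ Projective.factorThru h' π ≫ N.d (n + 1) n
      = g ≫ Projective.factorThru h' π ≫ π ≫ ι := by rw [h2]
    _ = g ≫ h' ≫ ι := by rw [← Category.assoc (Projective.factorThru h' π), h3]
    _ = (g ≫ h') ≫ ι := by rw [Category.assoc]
    _ = u := by rw [hfac]; exact ModuleCat.hom_ext (LinearMap.subtype_comp_codRestrict _ _ _)

lemma eqToHomD (X : Cx R) {a c : ℤ} (h : a = c) (j : ℤ) :
    eqToHom (congrArg X.X h) ≫ X.d c j = X.d a j := by subst h; simp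

structure StepData (M N : Cx R) (f : M ⟶ N) (n : ℤ) where
  Q : ModuleCat.{u} R
  proj : Projective Q
  s : M.X n ⟶ Q
  t : Q ⟶ N.X (n + 1)
  r : M.X (n - 1) ⟶ N.X n
  eq : s ≫ t ≫ N.d (n + 1) n = f.f n - M.d n (n - 1) ≫ r

noncomputable def F (M N : Cx R) (f : M ⟶ N) (b : ℤ) (hN : IsExactCx N)
    (hM : ∀ n, n ≤ b → IsZero (M.X n))
    (h : ∀ n : ℤ, InSubprojDomain (M.X n) (cyclesAt N n)) :
    ∀ n : ℤ, StepData M N f n := fun n =>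
  if hn : n ≤ b then
    { Q := ModuleCat.of R PUnit
      proj := (ModuleCat.isZero_of_subsingleton _).projective
      s := 0
      t := 0
      r := 0
      eq := by
        have h0 : f.f n = 0 := (hM n hn).eq_of_src _ _
        simp [h0] }
  else
    have prev := F M N f b hN hM h (n - 1)
    let r : M.X (n - 1) ⟶ N.X n :=
      prev.s ≫ prev.t ≫ eqToHom (congrArg N.X (show n - 1 + 1 = n by omega))
    let u : M.X n ⟶ N.X n := f.f n - M.d n (n - 1) ≫ r
    have hu : u ≫ N.d n (n - 1) = 0 := by
      have hr : r ≫ N.d n (n - 1) = f.f (n - 1) - M.d (n - 1) (n - 1 - 1) ≫ prev.r := by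
        show prev.s ≫ prev.t ≫ _ ≫ _ = _
        rw [eqToHomD N (show n - 1 + 1 = n by omega) (n - 1)]
        exact prev.eq
      simp only [u, Preadditive.sub_comp, Category.assoc, hr, HomologicalComplex.Hom.comm]
      simp [Preadditive.comp_sub]
    have e := step N hN n (h n) u hu
    { Q := e.choose
      proj := e.choose_spec.choose_spec.choose_spec.1
      s := e.choose_spec.choose
      t := e.choose_spec.choose_spec.choose
      r := r
      eq := e.choose_spec.choose_spec.choose_spec.2 }
termination_by n => (n - b).toNat
decreasing_by omega

lemma F_r (M N : Cx R) (f : M ⟶ N) (b : ℤ) (hN : IsExactCx N)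
    (hM : ∀ n, n ≤ b → IsZero (M.X n))
    (h : ∀ n : ℤ, InSubprojDomain (M.X n) (cyclesAt N n)) (n : ℤ) :
    (F M N f b hN hM h n).r =
      (F M N f b hN hM h (n - 1)).s ≫ (F M N f b hN hM h (n - 1)).t ≫
        eqToHom (congrArg N.X (show n - 1 + 1 = n by omega)) := by
  rw [F]
  by_cases hn : n ≤ b
  · rw [dif_pos hn]
    rw [F]
    rw [dif_pos (show n - 1 ≤ b by omega)]
    simp
  · rw [dif_neg hn]

noncomputable abbrev Pcx (Q : ℤ → ModuleCat.{u} R) : Cx R :=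
  ChainComplex.of (fun m => Q (m - 1) ⊞ Q m)
    (fun n => biprod.fst ≫ eqToHom (congrArg Q (show n + 1 - 1 = n by omega)) ≫ biprod.inr)
    (fun n => by simp)

variable {Q : ℤ → ModuleCat.{u} R}

lemma Pcx_d (n : ℤ) : (Pcx Q).d (n + 1) n =
    biprod.fst ≫ eqToHom (congrArg Q (show n + 1 - 1 = n by omega)) ≫ biprod.inr :=
  by simp [Pcx]

lemma sigma_cast {M : Cx R} (σ : ∀ n, M.X n ⟶ Q n) {a c : ℤ} (h : a = c) (i : ℤ) :
    M.d i a ≫ σ a ≫ eqToHom (congrArg Q h) = M.d i c ≫ σ c := by subst h; simp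

noncomputable def toP {M : Cx R} (σ : ∀ n, M.X n ⟶ Q n) : M ⟶ Pcx Q where
  f m := biprod.lift (M.d m (m - 1) ≫ σ (m - 1)) (σ m)
  comm' i j hij := by
    simp only [ComplexShape.down_Rel] at hij
    subst hij
    rw [Pcx_d]
    apply biprod.hom_ext
    · simp
    · simp only [Category.assoc, biprod.inr_snd, Category.comp_id, biprod.lift_fst_assoc,
        biprod.lift_snd, biprod.lift_snd_assoc]
      exact sigma_cast σ (show j + 1 - 1 = j by omega) (j + 1)

lemma tau_d_cast {Y : Cx R} (τ : ∀ n, Q n ⟶ Y.X (n + 1)) {a c : ℤ} (h : a = c) (j : ℤ) :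
    τ a ≫ Y.d (a + 1) j = eqToHom (congrArg Q h) ≫ τ c ≫ Y.d (c + 1) j := by subst h; simp

lemma eqToHom_d (X : Cx R) {a c : ℤ} (h : a = c) (j : ℤ) (p : X.X a = X.X c) :
    eqToHom p ≫ X.d c j = X.d a j := by subst h; simp [eqToHom_refl]

noncomputable def fromP {Y : Cx R} (τ : ∀ n, Q n ⟶ Y.X (n + 1)) : Pcx Q ⟶ Y where
  f m := biprod.desc (τ (m - 1) ≫ eqToHom (congrArg Y.X (show m - 1 + 1 = m by omega)))
    (τ m ≫ Y.d (m + 1) m)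
  comm' i j hij := by
    simp only [ComplexShape.down_Rel] at hij
    subst hij
    rw [Pcx_d]
    apply biprod.hom_ext'
    · simp only [biprod.inl_desc_assoc, Category.assoc, biprod.inl_fst_assoc,
        biprod.inr_desc]
      rw [eqToHom_d Y (show j + 1 - 1 + 1 = j + 1 by omega)]
      exact tau_d_cast τ (show j + 1 - 1 = j by omega) j
    · simp

lemma hom_cast {Y Y' : Cx R} (e : Y ⟶ Y') {a c : ℤ} (h : a = c) :
    e.f a ≫ eqToHom (congrArg Y'.X h) = eqToHom (congrArg Y.X h) ≫ e.f c := by subst h; simp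

lemma fromP_comp {Y Y' : Cx R} (τ : ∀ n, Q n ⟶ Y.X (n + 1)) (e : Y ⟶ Y') :
    fromP τ ≫ e = fromP (fun n => τ n ≫ e.f (n + 1)) := by
  apply HomologicalComplex.hom_ext; intro m
  show biprod.desc _ _ ≫ e.f m = biprod.desc _ _
  apply biprod.hom_ext'
  · simp only [biprod.inl_desc_assoc, Category.assoc, biprod.inl_desc]
    rw [hom_cast e (show m - 1 + 1 = m by omega)]
  · simp only [biprod.inr_desc_assoc, Category.assoc, biprod.inr_desc]
    rw [e.comm (m + 1) m]

lemma eta_cast {Y : Cx R} (φ : Pcx Q ⟶ Y) {a b m : ℤ} (h1 : a + 1 = b) (h2 : b = m)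
    (p1 : Q a = Q (b - 1)) (p2 : Y.X b = Y.X m) (p3 : Q a = Q (m - 1)) :
    eqToHom p1 ≫ (biprod.inl : Q (b - 1) ⟶ Q (b - 1) ⊞ Q b) ≫ φ.f b ≫ eqToHom p2 =
      eqToHom p3 ≫ (biprod.inl : Q (m - 1) ⟶ Q (m - 1) ⊞ Q m) ≫ φ.f m := by
  subst h2; simp

lemma fromP_eta {Y : Cx R} (φ : Pcx Q ⟶ Y) :
    fromP (fun n => eqToHom (congrArg Q (show n = n + 1 - 1 by omega)) ≫ biprod.inl ≫
      φ.f (n + 1)) = φ := by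
  apply HomologicalComplex.hom_ext; intro m
  show biprod.desc _ _ = φ.f m
  apply biprod.hom_ext'
  · simp only [biprod.inl_desc, Category.assoc]
    rw [eta_cast φ (show m - 1 + 1 = m - 1 + 1 by rfl) (show m - 1 + 1 = m by omega) (p3 := rfl)]
    simp
  · simp only [biprod.inr_desc, Category.assoc]
    rw [φ.comm (m + 1) m, Pcx_d]
    simp

theorem projective_Pcx (hQ : ∀ n, Projective (Q n)) : Projective (Pcx Q) := by
  constructor
  intro E X φ e he
  have hlift : ∀ n : ℤ, ∃ ψ : Q n ⟶ E.X (n + 1),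
      ψ ≫ e.f (n + 1) = eqToHom (congrArg Q (show n = n + 1 - 1 by omega)) ≫ biprod.inl ≫
        φ.f (n + 1) := fun n =>
    (hQ n).factors _ (e.f (n + 1))
  choose ψ hψ using hlift
  refine ⟨fromP ψ, ?_⟩
  rw [fromP_comp]
  rw [show (fun n => ψ n ≫ e.f (n + 1)) = fun n =>
    eqToHom (congrArg Q (show n = n + 1 - 1 by omega)) ≫ biprod.inl ≫ φ.f (n + 1)
    from funext hψ]
  exact fromP_eta φ

end Stmt5Aux

/-- Theorem 2.6. -/

theorem stmt5 (R : Type u) [Ring R] (N M : Cx R)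
    (hN : IsExactCx N) (hM : BoundedBelow M)
    (h : ∀ n : ℤ, InSubprojDomain (M.X n) (cyclesAt N n)) :
    InSubprojDomain M N := by
  intro f
  obtain ⟨b, hb⟩ := hM
  refine ⟨Stmt5Aux.Pcx (fun n => (Stmt5Aux.F M N f b hN hb h n).Q),
    Stmt5Aux.toP (fun n => (Stmt5Aux.F M N f b hN hb h n).s),
    Stmt5Aux.fromP (fun n => (Stmt5Aux.F M N f b hN hb h n).t),
    Stmt5Aux.projective_Pcx (fun n => (Stmt5Aux.F M N f b hN hb h n).proj), ?_⟩
  apply HomologicalComplex.hom_ext; intro m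
  rw [HomologicalComplex.comp_f]
  show biprod.lift _ _ ≫ biprod.desc _ _ = f.f m
  rw [biprod.lift_desc]
  have h1 := (Stmt5Aux.F M N f b hN hb h m).eq
  have h2 := Stmt5Aux.F_r M N f b hN hb h m
  simp only [Category.assoc, h1, h2]
  abel
end

section
/- Let R be a quasi-Frobenius ring (a left R-module is projective if and only if it is injective) that is not semisimple. Then there exist an exact chain complex P of left R-modules all of whose components are projective and an exact complex E such that Z_n(E) ∈ Pr⁻¹_Mod(P_n) for every n ∈ ℤ but E ∉ Pr⁻¹_C(P). -/
open CategoryTheory CategoryTheory.Limits ZeroObject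

universe u

variable {R : Type u} [Ring R]

section Stmt8Aux

variable (M : ModuleCat.{u} R)

noncomputable def Kaux : ℕ → ModuleCat.{u} R
  | 0 => M
  | n + 1 => ModuleCat.of R (LinearMap.ker (Projective.π (Kaux n)).hom)

noncomputable def Caux : ℕ → ModuleCat.{u} R
  | 0 => M
  | n + 1 => ModuleCat.of R
      (↥(Injective.under (Caux n)) ⧸ LinearMap.range (Injective.ι (Caux n)).hom)

noncomputable def PXaux : ℤ → ModuleCat.{u} R
  | .ofNat m => Projective.over (Kaux M m)
  | .negSucc m => Injective.under (Caux M m)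

noncomputable def Pdaux : ∀ n : ℤ, PXaux M (n + 1) ⟶ PXaux M n
  | .ofNat m =>
      Projective.π (Kaux M (m + 1)) ≫ ModuleCat.ofHom (LinearMap.ker (Projective.π (Kaux M m)).hom).subtype
  | .negSucc 0 => Projective.π (Kaux M 0) ≫ Injective.ι (Caux M 0)
  | .negSucc (m + 1) =>
      ((ModuleCat.ofHom (LinearMap.range (Injective.ι (Caux M m)).hom).mkQ :
          Injective.under (Caux M m) ⟶ Caux M (m + 1)) ≫ Injective.ι (Caux M (m + 1)) :
        Injective.under (Caux M m) ⟶ Injective.under (Caux M (m + 1)))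

lemma Pdaux_ofNat (m : ℕ) :
    Pdaux M (.ofNat m) =
      Projective.π (Kaux M (m + 1)) ≫ ModuleCat.ofHom (LinearMap.ker (Projective.π (Kaux M m)).hom).subtype := rfl

lemma Pdaux_negSucc_zero :
    Pdaux M (.negSucc 0) = Projective.π (Kaux M 0) ≫ Injective.ι (Caux M 0) := rfl

lemma Pdaux_negSucc_succ (m : ℕ) :
    Pdaux M (.negSucc (m + 1)) =
      ((ModuleCat.ofHom (LinearMap.range (Injective.ι (Caux M m)).hom).mkQ :
          Injective.under (Caux M m) ⟶ Caux M (m + 1)) ≫ Injective.ι (Caux M (m + 1)) :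
        Injective.under (Caux M m) ⟶ Injective.under (Caux M (m + 1))) := rfl

lemma ker_elt {A B : ModuleCat.{u} R} (f : A ⟶ B)
    (y : ModuleCat.of R (LinearMap.ker f.hom)) :
    f ((LinearMap.ker f.hom).subtype y) = 0 := y.2

lemma mkQ_ι_elt (A : ModuleCat.{u} R) (c : A) :
    (LinearMap.range (Injective.ι A).hom).mkQ (Injective.ι A c) = 0 :=
  (Submodule.Quotient.mk_eq_zero _).mpr ⟨c, rfl⟩

lemma Pdaux_sq : ∀ n : ℤ, Pdaux M (n + 1) ≫ Pdaux M n = 0 := by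
  rintro (m | (_ | (_ | k)))
  · show Pdaux M (.ofNat (m + 1)) ≫ Pdaux M (.ofNat m) = 0
    apply ModuleCat.hom_ext; apply LinearMap.ext; intro x
    show (LinearMap.ker (Projective.π (Kaux M m)).hom).subtype
        (Projective.π (Kaux M (m + 1))
          ((LinearMap.ker (Projective.π (Kaux M (m + 1))).hom).subtype
            (Projective.π (Kaux M (m + 1 + 1)) x))) = 0
    rw [ker_elt (Projective.π (Kaux M (m + 1))) (Projective.π (Kaux M (m + 1 + 1)) x)]; exact map_zero _
  · show Pdaux M (.ofNat 0) ≫ Pdaux M (.negSucc 0) = 0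
    apply ModuleCat.hom_ext; apply LinearMap.ext; intro x
    show Injective.ι (Caux M 0)
        (Projective.π (Kaux M 0)
          ((LinearMap.ker (Projective.π (Kaux M 0)).hom).subtype
            (Projective.π (Kaux M (0 + 1)) x))) = 0
    rw [ker_elt (Projective.π (Kaux M 0)) (Projective.π (Kaux M (0 + 1)) x)]; exact map_zero _
  · show Pdaux M (.negSucc 0) ≫ Pdaux M (.negSucc 1) = 0
    apply ModuleCat.hom_ext; apply LinearMap.ext; intro x
    show Injective.ι (Caux M (0 + 1))
        ((LinearMap.range (Injective.ι (Caux M 0)).hom).mkQ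
          (Injective.ι (Caux M 0) (Projective.π (Kaux M 0) x))) = 0
    rw [mkQ_ι_elt (Caux M 0) (Projective.π (Kaux M 0) x)]; exact map_zero _
  · show Pdaux M (.negSucc (k + 1)) ≫ Pdaux M (.negSucc (k + 2)) = 0
    apply ModuleCat.hom_ext; apply LinearMap.ext; intro x
    show Injective.ι (Caux M (k + 1 + 1))
        ((LinearMap.range (Injective.ι (Caux M (k + 1))).hom).mkQ
          (Injective.ι (Caux M (k + 1))
            ((LinearMap.range (Injective.ι (Caux M k)).hom).mkQ x))) = 0
    rw [mkQ_ι_elt (Caux M (k + 1)) ((LinearMap.range (Injective.ι (Caux M k)).hom).mkQ x)]; exact map_zero _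

noncomputable def Pcx : Cx R := ChainComplex.of (PXaux M) (Pdaux M) (Pdaux_sq M)

lemma Pcx_d (n : ℤ) : (Pcx M).d (n + 1) n = Pdaux M n := ChainComplex.of_d (PXaux M) (Pdaux M) n

variable {M} in
lemma exactAt_of_elems (X : Cx R) (i j k : ℤ) (hi : i = j + 1) (hk : k = j - 1)
    (h : ∀ x : X.X j, X.d j k x = 0 → ∃ y : X.X i, X.d i j y = x) : X.ExactAt j := by
  rw [X.exactAt_iff' i j k
    ((ComplexShape.down ℤ).prev_eq' (by simp only [ComplexShape.down_Rel]; omega))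
    ((ComplexShape.down ℤ).next_eq' (by simp only [ComplexShape.down_Rel]; omega))]
  rw [ShortComplex.moduleCat_exact_iff]
  exact h

lemma Pcx_exact : IsExactCx (Pcx M) := by
  rintro ((_ | m) | m)
  · -- j = 0
    refine exactAt_of_elems (Pcx M) (Int.ofNat 0 + 1) (Int.ofNat 0) (Int.negSucc 0)
      rfl (by decide) ?_
    intro x hx
    have hg : (Pcx M).d (Int.ofNat 0) (Int.negSucc 0) = Pdaux M (Int.negSucc 0) :=
      Pcx_d M (Int.negSucc 0)
    rw [hg, Pdaux_negSucc_zero] at hx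
    have hx' : Injective.ι (Caux M 0) (Projective.π (Kaux M 0) x) = 0 := hx
    have hπ : Projective.π (Kaux M 0) x = 0 := by
      apply (ModuleCat.mono_iff_injective (Injective.ι (Caux M 0))).mp inferInstance
      rw [hx']; exact (map_zero _).symm
    obtain ⟨y, hy⟩ := (ModuleCat.epi_iff_surjective (Projective.π (Kaux M (0 + 1)))).mp
      inferInstance ⟨x, LinearMap.mem_ker.mpr hπ⟩
    refine ⟨y, ?_⟩
    rw [Pcx_d M (Int.ofNat 0), Pdaux_ofNat]
    show (LinearMap.ker (Projective.π (Kaux M 0)).hom).subtype (Projective.π (Kaux M (0 + 1)) y) = x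
    rw [hy]; rfl
  · -- j = m + 1 > 0
    refine exactAt_of_elems (Pcx M) (Int.ofNat (m + 1) + 1) (Int.ofNat (m + 1)) (Int.ofNat m)
      rfl (by simp [Int.natCast_succ]) ?_
    intro x hx
    have hg : (Pcx M).d (Int.ofNat (m + 1)) (Int.ofNat m) = Pdaux M (Int.ofNat m) :=
      Pcx_d M (Int.ofNat m)
    rw [hg, Pdaux_ofNat] at hx
    have hx' : (LinearMap.ker (Projective.π (Kaux M m)).hom).subtype
        (Projective.π (Kaux M (m + 1)) x) = 0 := hx
    have hπ : Projective.π (Kaux M (m + 1)) x = 0 :=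
      Submodule.injective_subtype _ (by rw [hx']; exact (map_zero _).symm)
    obtain ⟨y, hy⟩ := (ModuleCat.epi_iff_surjective (Projective.π (Kaux M (m + 1 + 1)))).mp
      inferInstance ⟨x, LinearMap.mem_ker.mpr hπ⟩
    refine ⟨y, ?_⟩
    rw [Pcx_d M (Int.ofNat (m + 1)), Pdaux_ofNat]
    show (LinearMap.ker (Projective.π (Kaux M (m + 1))).hom).subtype
      (Projective.π (Kaux M (m + 1 + 1)) y) = x
    rw [hy]; rfl
  · -- j = negSucc m
    refine exactAt_of_elems (Pcx M) (Int.negSucc m + 1) (Int.negSucc m) (Int.negSucc (m + 1))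
      rfl (Int.negSucc_sub_one m).symm ?_
    intro x hx
    have hg : (Pcx M).d (Int.negSucc m) (Int.negSucc (m + 1)) = Pdaux M (Int.negSucc (m + 1)) :=
      Pcx_d M (Int.negSucc (m + 1))
    rw [hg, Pdaux_negSucc_succ] at hx
    have hx' : Injective.ι (Caux M (m + 1))
        ((LinearMap.range (Injective.ι (Caux M m)).hom).mkQ x) = 0 := hx
    have hq : (LinearMap.range (Injective.ι (Caux M m)).hom).mkQ x = 0 := by
      apply (ModuleCat.mono_iff_injective (Injective.ι (Caux M (m + 1)))).mp inferInstance
      rw [hx']; exact (map_zero _).symm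
    have hmem : x ∈ LinearMap.range (Injective.ι (Caux M m)).hom := by
      exact (Submodule.Quotient.mk_eq_zero _).mp hq
    obtain ⟨c, hc⟩ := hmem
    have hf : (Pcx M).d (Int.negSucc m + 1) (Int.negSucc m) = Pdaux M (Int.negSucc m) :=
      Pcx_d M (Int.negSucc m)
    match m with
    | 0 =>
      obtain ⟨y, hy⟩ := (ModuleCat.epi_iff_surjective (Projective.π (Kaux M 0))).mp
        inferInstance c
      refine ⟨y, ?_⟩
      rw [hf, Pdaux_negSucc_zero]
      show Injective.ι (Caux M 0) (Projective.π (Kaux M 0) y) = x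
      rw [hy, hc]
    | m' + 1 =>
      obtain ⟨y, hy⟩ := Submodule.mkQ_surjective (LinearMap.range (Injective.ι (Caux M m')).hom) c
      refine ⟨y, ?_⟩
      rw [hf, Pdaux_negSucc_succ]
      show Injective.ι (Caux M (m' + 1))
        ((LinearMap.range (Injective.ι (Caux M m')).hom).mkQ y) = x
      rw [hy, hc]

lemma Pcx_projective (hQF : ∀ N : ModuleCat.{u} R, Projective N ↔ Injective N) :
    ∀ n : ℤ, Projective ((Pcx M).X n) := by
  rintro (m | m)
  · exact (inferInstance : Projective (Projective.over (Kaux M m)))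
  · exact (hQF (Injective.under (Caux M m))).mpr (Injective.injective_under _)

end Stmt8Aux

section Cone

variable (X : Cx R)

/-- The contractible complex `⊕ₙ D^n(Xₙ)`, with components `Xₙ × Xₙ₊₁`. -/
noncomputable def coneCx : Cx R :=
  ChainComplex.of (fun n => ModuleCat.of R (↥(X.X n) × ↥(X.X (n + 1))))
    (fun n => ModuleCat.ofHom (LinearMap.prod 0 (LinearMap.fst R ↥(X.X (n + 1)) ↥(X.X (n + 1 + 1)))))
    (fun n => by
      apply ModuleCat.hom_ext; apply LinearMap.ext; intro x
      show (LinearMap.prod 0 (LinearMap.fst R ↥(X.X (n + 1)) ↥(X.X (n + 1 + 1))))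
        ((LinearMap.prod 0 (LinearMap.fst R ↥(X.X (n + 1 + 1)) ↥(X.X (n + 1 + 1 + 1)))) x) = 0
      simp)

lemma coneCx_d (n : ℤ) :
    (coneCx X).d (n + 1) n =
        ModuleCat.ofHom (LinearMap.prod 0 (LinearMap.fst R ↥(X.X (n + 1)) ↥(X.X (n + 1 + 1)))) :=
  ChainComplex.of_d (fun n => ModuleCat.of R (↥(X.X n) × ↥(X.X (n + 1))))
    (fun n => ModuleCat.ofHom (LinearMap.prod 0 (LinearMap.fst R ↥(X.X (n + 1)) ↥(X.X (n + 1 + 1))))) n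

/-- The canonical chain map from the cone complex onto `X`. -/
noncomputable def conePi : coneCx X ⟶ X where
  f n := ModuleCat.ofHom (LinearMap.fst R ↥(X.X n) ↥(X.X (n + 1)) + (X.d (n + 1) n).hom.comp (LinearMap.snd R _ _))
  comm' i j hij := by
    obtain rfl : i = j + 1 := by simpa using hij.symm
    rw [coneCx_d]
    apply ModuleCat.hom_ext; apply LinearMap.ext; intro x
    show X.d (j + 1) j (x.1 + X.d (j + 1 + 1) (j + 1) x.2) =
      ((0 : ↥(X.X j)) + X.d (j + 1) j x.1 : ↥(X.X j))
    rw [map_add, zero_add]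
    have : X.d (j + 1) j (X.d (j + 1 + 1) (j + 1) x.2) = 0 := by
      have h := X.d_comp_d (j + 1 + 1) (j + 1) j
      calc X.d (j + 1) j (X.d (j + 1 + 1) (j + 1) x.2)
          = (X.d (j + 1 + 1) (j + 1) ≫ X.d (j + 1) j) x.2 := rfl
        _ = 0 := by rw [h]; rfl
    rw [this, add_zero]

lemma conePi_surj (n : ℤ) (x : X.X n) : (conePi X).f n (x, 0) = x := by
  show x + X.d (n + 1) n 0 = x
  rw [map_zero, add_zero]

instance conePi_epi : Epi (conePi X) := by
  constructor
  intro Z u v huv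
  ext n x : 3
  have h0 : (conePi X).f n ≫ u.f n = (conePi X).f n ≫ v.f n := by
    rw [← HomologicalComplex.comp_f, ← HomologicalComplex.comp_f, huv]
  have h1 : u.f n ((conePi X).f n (x, 0)) = v.f n ((conePi X).f n (x, 0)) :=
    LinearMap.congr_fun (congrArg ModuleCat.Hom.hom h0) (x, 0)
  rwa [conePi_surj] at h1

end Cone

lemma projective_of_retract {A B : ModuleCat.{u} R} [Projective B] (i : A ⟶ B) (p : B ⟶ A)
    (hip : ∀ a : A, p (i a) = a) : Projective A := by
  constructor
  intro E Y f e he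
  haveI := he
  obtain ⟨f', hf'⟩ := Projective.factors (p ≫ f) e
  refine ⟨i ≫ f', ?_⟩
  apply ModuleCat.hom_ext; apply LinearMap.ext; intro a
  show e (f' (i a)) = f a
  have h2 : e (f' (i a)) = f (p (i a)) := LinearMap.congr_fun (congrArg ModuleCat.Hom.hom hf') (i a)
  rw [h2, hip]


/-- Example 2.9. -/
theorem stmt8 (R : Type u) [Ring R]
    (hQF : ∀ M : ModuleCat.{u} R, Projective M ↔ Injective M)
    (hss : ¬ ∀ M : ModuleCat.{u} R, Projective M) :
    ∃ P E : Cx R, IsExactCx P ∧ (∀ n : ℤ, Projective (P.X n)) ∧ IsExactCx E ∧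
      (∀ n : ℤ, InSubprojDomain (P.X n) (cyclesAt E n)) ∧ ¬ InSubprojDomain P E := by

  obtain ⟨M, hM⟩ := not_forall.mp hss
  refine ⟨Pcx M, Pcx M, Pcx_exact M, Pcx_projective M hQF, Pcx_exact M,
    fun n f => ⟨(Pcx M).X n, 𝟙 _, f, Pcx_projective M hQF n, Category.id_comp f⟩, ?_⟩
  intro hsub
  obtain ⟨Q, g, h, hQ, hgh⟩ := hsub (𝟙 (Pcx M))
  haveI := hQ
  haveI := conePi_epi (Pcx M)
  set ℓ : Pcx M ⟶ coneCx (Pcx M) := g ≫ Projective.factorThru h (conePi (Pcx M)) with hℓdef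
  have hℓ : ℓ ≫ conePi (Pcx M) = 𝟙 (Pcx M) := by
    rw [hℓdef, Category.assoc, Projective.factorThru_comp, hgh]
  have h0 : (ℓ ≫ conePi (Pcx M)).f (Int.negSucc 0) = 𝟙 ((Pcx M).X (Int.negSucc 0)) := by
    rw [hℓ]; rfl
  have h1 : ∀ x : ↥((Pcx M).X (Int.negSucc 0)),
      (conePi (Pcx M)).f (Int.negSucc 0) (ℓ.f (Int.negSucc 0) x) = x :=
    fun x => LinearMap.congr_fun (congrArg ModuleCat.Hom.hom h0) x
  have hcd : (coneCx (Pcx M)).d (Int.negSucc 0) (Int.negSucc 1) =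
      ModuleCat.ofHom (LinearMap.prod 0 (LinearMap.fst R ↥((Pcx M).X (Int.negSucc 1 + 1))
          ↥((Pcx M).X (Int.negSucc 1 + 1 + 1)))) :=
    coneCx_d (Pcx M) (Int.negSucc 1)
  have hPd : (Pcx M).d (Int.negSucc 0) (Int.negSucc 1) = Pdaux M (Int.negSucc 1) :=
    Pcx_d M (Int.negSucc 1)
  -- the key retract identity
  have key : ∀ a : ↥M, Projective.π (Kaux M 0)
      ((ℓ.f (Int.negSucc 0) (Injective.ι (Caux M 0) a)).2) = a := by
    intro a
    have hdx : (Pcx M).d (Int.negSucc 0) (Int.negSucc 1) (Injective.ι (Caux M 0) a) = 0 := by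
      rw [hPd, Pdaux_negSucc_succ]
      show Injective.ι (Caux M (0 + 1))
        ((LinearMap.range (Injective.ι (Caux M 0)).hom).mkQ (Injective.ι (Caux M 0) a)) = 0
      rw [mkQ_ι_elt (Caux M 0) a]; exact map_zero _
    have h3 : (coneCx (Pcx M)).d (Int.negSucc 0) (Int.negSucc 1)
        (ℓ.f (Int.negSucc 0) (Injective.ι (Caux M 0) a)) =
        ℓ.f (Int.negSucc 1) ((Pcx M).d (Int.negSucc 0) (Int.negSucc 1)
          (Injective.ι (Caux M 0) a)) :=
      LinearMap.congr_fun (congrArg ModuleCat.Hom.hom (ℓ.comm (Int.negSucc 0) (Int.negSucc 1))) _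
    rw [hdx, map_zero, hcd] at h3
    have h5 : (ℓ.f (Int.negSucc 0) (Injective.ι (Caux M 0) a)).1 = 0 :=
      congrArg Prod.snd h3
    have h7 : (ℓ.f (Int.negSucc 0) (Injective.ι (Caux M 0) a)).1 +
        (Pcx M).d (Int.negSucc 0 + 1) (Int.negSucc 0)
          ((ℓ.f (Int.negSucc 0) (Injective.ι (Caux M 0) a)).2) =
        Injective.ι (Caux M 0) a := h1 _
    rw [h5, zero_add, Pcx_d M (Int.negSucc 0), Pdaux_negSucc_zero] at h7
    have h8 : Injective.ι (Caux M 0) (Projective.π (Kaux M 0)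
        ((ℓ.f (Int.negSucc 0) (Injective.ι (Caux M 0) a)).2)) =
        Injective.ι (Caux M 0) a := h7
    exact (ModuleCat.mono_iff_injective (Injective.ι (Caux M 0))).mp inferInstance h8
  have : Projective M := by
    refine projective_of_retract (B := Projective.over (Kaux M 0))
      (ModuleCat.ofHom ((LinearMap.snd R ↥((Pcx M).X (Int.negSucc 0)) ↥((Pcx M).X (Int.negSucc 0 + 1))).comp
          ((ℓ.f (Int.negSucc 0)).hom.comp (Injective.ι (Caux M 0)).hom)))
      (Projective.π (Kaux M 0)) ?_
    intro a
    exact key a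
  exact hM this
end

section
/- Let R be a ring and 𝓛 a class of left R-modules containing the zero module. Then every bounded below complex X all of whose components lie in 𝓛 is a dg𝓛 complex; that is, for every exact complex G with Z_n(G) ∈ Pr⁻¹_Mod(𝓛) for all n, and every k ∈ ℤ, every chain map X → G[k] is null-homotopic. -/
open CategoryTheory CategoryTheory.Limits ZeroObject

universe u

variable {R : Type u} [Ring R]

section Aux

variable {R : Type u} [Ring R]

/-- Key lifting lemma: a map into `G_p` killing `d` lifts along `d : G_r ⟶ G_p`. -/
lemma liftLemma (G : Cx R) (hG : IsExactCx G)
    (A : ModuleCat.{u} R) (p q r : ℤ) (hq : q = p - 1) (hr : r = p + 1)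
    (hsub : InSubprojDomain A (cyclesAt G p))
    (φ : A ⟶ G.X p) (hφ : φ ≫ G.d p q = 0) :
    ∃ s : A ⟶ G.X r, s ≫ G.d r p = φ := by
  subst hq hr
  have hmem : ∀ a : A, φ a ∈ LinearMap.ker (G.d p (p-1)).hom := by
    intro a
    have := ConcreteCategory.congr_hom hφ a
    simpa using this
  let φ' : A ⟶ cyclesAt G p := ModuleCat.ofHom (LinearMap.codRestrict _ φ.hom hmem)
  have hmem2 : ∀ x : G.X (p+1), G.d (p+1) p x ∈ LinearMap.ker (G.d p (p-1)).hom := by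
    intro x
    have : G.d p (p-1) (G.d (p+1) p x) = (G.d (p+1) p ≫ G.d p (p-1)) x := rfl
    rw [LinearMap.mem_ker, this, HomologicalComplex.d_comp_d]
    rfl
  let π : G.X (p+1) ⟶ cyclesAt G p := ModuleCat.ofHom (LinearMap.codRestrict _ (G.d (p+1) p).hom hmem2)
  have hπ : Function.Surjective π := by
    intro ⟨x, hx⟩
    have hex := hG p
    rw [HomologicalComplex.exactAt_iff' G (p+1) p (p-1) (by simp) (by simp),
      ShortComplex.moduleCat_exact_iff] at hex
    obtain ⟨y, hy⟩ := hex x (by exact hx)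
    exact ⟨y, Subtype.ext hy⟩
  have : Epi π := (ModuleCat.epi_iff_surjective π).2 hπ
  obtain ⟨P, g, h, hP, hgh⟩ := hsub φ'
  refine ⟨g ≫ Projective.factorThru h π, ?_⟩
  have hfac : Projective.factorThru h π ≫ π = h := Projective.factorThru_comp h π
  apply ModuleCat.hom_ext
  apply LinearMap.ext
  intro a
  show G.d (p+1) p ((Projective.factorThru h π) (g a)) = φ a
  have e1 : G.d (p+1) p ((Projective.factorThru h π) (g a))
      = (π ((Projective.factorThru h π) (g a))).1 := rfl
  have e2 : π ((Projective.factorThru h π) (g a)) = h (g a) :=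
    ConcreteCategory.congr_hom hfac (g a)
  have e3 : (g ≫ h) a = φ' a := ConcreteCategory.congr_hom hgh a
  rw [e1, e2]; rw [show h (g a) = (g ≫ h) a from rfl, e3]
  rfl

open Classical in
/-- A choice of the next homotopy map, given the previous one. -/
noncomputable def nextS (M N : Cx R) (f : M ⟶ N) (i j : ℤ) (sp : M.X (i-1) ⟶ N.X i) :
    M.X i ⟶ N.X j :=
  if h : ∃ s : M.X i ⟶ N.X j, f.f i = s ≫ N.d j i + M.d i (i-1) ≫ sp then h.choose else 0

/-- The homotopy, built by recursion from degree `b` upwards. -/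
noncomputable def sRec (M N : Cx R) (f : M ⟶ N) (b : ℤ) (i j : ℤ) : M.X i ⟶ N.X j :=
  if b < i then nextS M N f i j (sRec M N f b (i-1) i) else 0
termination_by (i - b).toNat
decreasing_by omega

theorem sRec_prop (M N : Cx R) (f : M ⟶ N) (b : ℤ)
    (hM : ∀ n : ℤ, n ≤ b → IsZero (M.X n))
    (hHyp : ∀ n : ℤ, ∀ φ : M.X n ⟶ N.X n, φ ≫ N.d n (n-1) = 0 →
      ∃ s : M.X n ⟶ N.X (n+1), s ≫ N.d (n+1) n = φ)
    (n j i : ℤ) (hj : j = n + 1) (hi : i = n - 1) :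
    f.f n = sRec M N f b n j ≫ N.d j n + M.d n i ≫ sRec M N f b i n := by
  subst hj hi
  by_cases hn : b < n
  · have ih := sRec_prop M N f b hM hHyp (n-1) n (n-2) (by omega) (by omega)
    have hphi : (f.f n - M.d n (n-1) ≫ sRec M N f b (n-1) n) ≫ N.d n (n-1) = 0 := by
      rw [Preadditive.sub_comp, Category.assoc, f.comm n (n-1), ih]
      simp only [Preadditive.comp_add, ← Category.assoc, HomologicalComplex.d_comp_d,
        zero_comp, add_zero, sub_self]
    obtain ⟨s, hs⟩ := hHyp n _ hphi
    have hex : ∃ s' : M.X n ⟶ N.X (n+1),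
        f.f n = s' ≫ N.d (n+1) n + M.d n (n-1) ≫ sRec M N f b (n-1) n :=
      ⟨s, by rw [hs]; abel⟩
    rw [sRec, if_pos hn]
    unfold nextS
    rw [dif_pos hex]
    exact hex.choose_spec
  · have hz := hM n (by omega)
    have h1 : f.f n = 0 := hz.eq_of_src _ _
    have h2 : M.d n (n-1) = 0 := hz.eq_of_src _ _
    rw [sRec, if_neg hn, h1, h2, zero_comp, zero_comp, add_zero]
termination_by (n - b).toNat
decreasing_by omega

end Aux

/-- Lemma 3.5. -/
theorem stmt12 (R : Type u) [Ring R] (𝓛 : Set (ModuleCat.{u} R))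
    (h0L : (0 : ModuleCat.{u} R) ∈ 𝓛) (X : Cx R)
    (hX : BoundedBelow X) (hXL : ∀ n : ℤ, X.X n ∈ 𝓛) :
    ∀ G : Cx R, IsExactCx G → (∀ n : ℤ, ∀ L ∈ 𝓛, InSubprojDomain L (cyclesAt G n)) →
      ∀ k : ℤ, ∀ f : X ⟶ shiftCx G k, NullHomotopic f := by
  intro G hG hsub k f
  obtain ⟨b, hb⟩ := hX
  have hHyp : ∀ n : ℤ, ∀ φ : X.X n ⟶ (shiftCx G k).X n,
      φ ≫ (shiftCx G k).d n (n-1) = 0 →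
      ∃ s : X.X n ⟶ (shiftCx G k).X (n+1), s ≫ (shiftCx G k).d (n+1) n = φ := by
    intro n φ hφ
    dsimp only [shiftCx] at hφ ⊢
    have hphi : φ ≫ G.d (n-k) (n-1-k) = 0 := by
      erw [Linear.comp_units_smul] at hφ
      have h1 := congrArg (fun t => (Int.negOnePow k)⁻¹ • t) hφ
      have h2 : (Int.negOnePow k)⁻¹ • (Int.negOnePow k • (φ ≫ G.d (n-k) (n-1-k))) = φ ≫ G.d (n-k) (n-1-k) := inv_smul_smul _ _
      rw [← h2]
      exact h1.trans (smul_zero (M := ℤˣ) (A := X.X n ⟶ G.X (n-1-k)) _)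
    obtain ⟨s, hs⟩ := liftLemma G hG (X.X n) (n-k) (n-1-k) (n+1-k) (by omega) (by omega)
      (hsub (n-k) (X.X n) (hXL n)) φ hphi
    refine ⟨(Int.negOnePow k)⁻¹ • s, ?_⟩
    rw [Linear.comp_units_smul, Linear.units_smul_comp, smul_inv_smul, hs]
  exact ⟨sRec X (shiftCx G k) f b, fun n =>
    sRec_prop X (shiftCx G k) f b hb hHyp n (n+1) (n-1) rfl rfl⟩
end

section
/- For a ring R and a chain complex F of left R-modules, the following are equivalent: (1) F is exact; (2) every chain map X → F with X a bounded complex of projective modules factors through a projective complex; (3) every chain map X → F with X a bounded below complex of projective modules factors through a projective complex; (4) every chain map X → F with X a DG-projective complex factors through a projective complex. -/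
open CategoryTheory CategoryTheory.Limits ZeroObject

universe u

variable {R : Type u} [Ring R]

open CategoryTheory CategoryTheory.Limits ZeroObject

variable {R : Type u} [Ring R]

lemma mc_add_apply {M N : ModuleCat.{u} R} (f g : M ⟶ N) (x : M) : (f + g) x = f x + g x := rfl

lemma mc_zero_apply {M N : ModuleCat.{u} R} (x : M) : (0 : M ⟶ N) x = 0 := rfl

lemma XIso_d (X : Cx R) {i i' : ℤ} (h : i = i') (j : ℤ) :
    (X.XIsoOfEq h).hom ≫ X.d i' j = X.d i j := by subst h; simp

lemma d_XIso (X : Cx R) (i : ℤ) {j j' : ℤ} (h : j = j') :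
    X.d i j ≫ (X.XIsoOfEq h).hom = X.d i j' := by subst h; simp

lemma XIso_d_apply (X : Cx R) {i i' : ℤ} (h : i = i') (j : ℤ) (x : X.X i) :
    X.d i' j ((X.XIsoOfEq h).hom x) = X.d i j x := by subst h; simp

lemma d_XIso_apply (X : Cx R) (i : ℤ) {j j' : ℤ} (h : j = j') (x : X.X i) :
    (X.XIsoOfEq h).hom (X.d i j x) = X.d i j' x := by subst h; simp

lemma castFst {A B : Cx R} (t : ∀ i j : ℤ, A.X i ⟶ B.X j) {i i' : ℤ} (h : i = i') (j : ℤ) :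
    t i j = (A.XIsoOfEq h).hom ≫ t i' j := by subst h; simp

lemma castSnd {A B : Cx R} (t : ∀ i j : ℤ, A.X i ⟶ B.X j) (i : ℤ) {j j' : ℤ} (h : j = j') :
    t i j' = t i j ≫ (B.XIsoOfEq h).hom := by subst h; simp

def ConcreteExact (G : Cx R) : Prop :=
  ∀ n : ℤ, ∀ x : G.X n, G.d n (n - 1) x = 0 → ∃ y : G.X (n + 1), G.d (n + 1) n y = x

lemma isExactCx_iff_concreteExact (G : Cx R) : IsExactCx G ↔ ConcreteExact G := by
  have key : ∀ n : ℤ, G.ExactAt n ↔ ((G.sc' (n+1) n (n-1)).Exact) := fun n =>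
    G.exactAt_iff' (n+1) n (n-1)
      ((ComplexShape.down ℤ).prev_eq' (by simp))
      ((ComplexShape.down ℤ).next_eq' (by simp))
  constructor
  · intro h n x hx
    have h' := (key n).mp (h n)
    rw [ShortComplex.moduleCat_exact_iff] at h'
    obtain ⟨y, hy⟩ := h' x hx
    exact ⟨y, hy⟩
  · intro h n
    rw [key n, ShortComplex.moduleCat_exact_iff]
    intro x hx
    exact h n x hx

lemma concreteExact_shiftCx {G : Cx R} (hG : ConcreteExact G) (k : ℤ) :
    ConcreteExact (shiftCx G k) := by
  intro n x hx
  change G.X (n - k) at x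
  replace hx : ((k.negOnePow : ℤ) • G.d (n - k) (n - 1 - k)) x = 0 := by
    rw [← Units.smul_def]; exact hx
  change (k.negOnePow : ℤ) • G.d (n - k) (n - 1 - k) x = 0 at hx
  have h1 : G.d (n - k) (n - 1 - k) x = 0 := by
    rcases Int.units_eq_one_or k.negOnePow with h | h <;> rw [h] at hx <;> simpa using hx
  have hx' : G.d (n - k) (n - k - 1) x = 0 := by
    rw [← d_XIso_apply G (n - k) (show n - 1 - k = n - k - 1 by omega), h1, map_zero]
  obtain ⟨y, hy⟩ := hG (n - k) x hx'
  refine ⟨(G.XIsoOfEq (show n - k + 1 = n + 1 - k by omega)).hom ((k.negOnePow : ℤ) • y), ?_⟩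
  show (k.negOnePow : ℤ) • G.d (n + 1 - k) (n - k)
    ((G.XIsoOfEq (show n - k + 1 = n + 1 - k by omega)).hom ((k.negOnePow : ℤ) • y)) = x
  rw [XIso_d_apply, map_zsmul, hy, smul_smul]
  have : ((k.negOnePow : ℤ)) * ((k.negOnePow : ℤ)) = 1 := by
    rcases Int.units_eq_one_or k.negOnePow with h | h <;> rw [h] <;> simp
  rw [this, one_smul]

section NH
variable {R : Type u} [Ring R]

/-- Corestriction of the differential onto cycles. -/
noncomputable def cycPi (G : Cx R) (n : ℤ) :
    G.X (n+1) ⟶ ModuleCat.of R (LinearMap.ker (G.d n (n-1)).hom) :=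
  ModuleCat.ofHom <| LinearMap.codRestrict (LinearMap.ker (G.d n (n-1)).hom) (G.d (n+1) n).hom
    (fun y => LinearMap.mem_ker.mpr (ConcreteCategory.congr_hom (G.d_comp_d (n+1) n (n-1)) y))

lemma cycPi_subtype (G : Cx R) (n : ℤ) :
    cycPi G n ≫ ModuleCat.ofHom (LinearMap.ker (G.d n (n-1)).hom).subtype = G.d (n+1) n := rfl

lemma cycPi_epi (G : Cx R) (hconc : ConcreteExact G) (n : ℤ) : Epi (cycPi G n) := by
  refine (ModuleCat.epi_iff_surjective _).mpr ?_
  rintro ⟨z, hz⟩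
  obtain ⟨y, hy⟩ := hconc n z (LinearMap.mem_ker.mp hz)
  exact ⟨y, Subtype.ext hy⟩

open Classical in
/-- Lift a morphism landing in cycles through the differential, for a concretely exact complex. -/
noncomputable def cycLift (G : Cx R) (hconc : ConcreteExact G) {P : ModuleCat.{u} R}
    (hP : Projective P) (n : ℤ) (g : P ⟶ G.X n) : P ⟶ G.X (n + 1) :=
  if h : ∀ x, G.d n (n - 1) (g x) = 0 then
    letI := hP
    letI := cycPi_epi G hconc n
    Projective.factorThru
      (ModuleCat.ofHom (LinearMap.codRestrict (LinearMap.ker (G.d n (n-1)).hom) g.hom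
        (fun x => LinearMap.mem_ker.mpr (h x))) :
          P ⟶ ModuleCat.of R (LinearMap.ker (G.d n (n-1)).hom))
      (cycPi G n)
  else 0

lemma cycLift_d (G : Cx R) (hconc : ConcreteExact G) {P : ModuleCat.{u} R}
    (hP : Projective P) (n : ℤ) (g : P ⟶ G.X n) (h : ∀ x, G.d n (n - 1) (g x) = 0) :
    cycLift G hconc hP n g ≫ G.d (n + 1) n = g := by
  unfold cycLift
  rw [dif_pos h]
  letI := hP
  letI := cycPi_epi G hconc n
  conv_lhs => rw [← cycPi_subtype G n, ← Category.assoc, Projective.factorThru_comp]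
  rfl
end NH

section NH2
variable {R : Type u} [Ring R]

open Classical in
/-- The recursively defined null-homotopy. -/
noncomputable def nhAux (X G : Cx R) (hconc : ConcreteExact G)
    (hproj : ∀ n : ℤ, Projective (X.X n)) (f : X ⟶ G) (b : ℤ) (i j : ℤ) : X.X i ⟶ G.X j :=
  if hij : j = i + 1 then
    if hi : i ≤ b then 0
    else
      (cycLift G hconc (hproj i) i
        (f.f i - X.d i (i - 1) ≫ nhAux X G hconc hproj f b (i-1) i)) ≫
          (G.XIsoOfEq hij.symm).hom
  else 0
termination_by (i - b).toNat
decreasing_by simp_wf; omega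

lemma nhAux_rel (X G : Cx R) (hconc : ConcreteExact G)
    (hproj : ∀ n : ℤ, Projective (X.X n)) (f : X ⟶ G) (b : ℤ)
    (hb : ∀ n, n ≤ b → IsZero (X.X n)) (n : ℤ) :
    f.f n = nhAux X G hconc hproj f b n (n+1) ≫ G.d (n+1) n +
      X.d n (n-1) ≫ nhAux X G hconc hproj f b (n-1) n := by
  suffices H : ∀ m : ℕ, ∀ n : ℤ, (n - b).toNat ≤ m →
      f.f n = nhAux X G hconc hproj f b n (n+1) ≫ G.d (n+1) n +
        X.d n (n-1) ≫ nhAux X G hconc hproj f b (n-1) n from H _ n le_rfl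
  intro m
  induction m with
  | zero =>
    intro n hn
    exact (hb n (by omega)).eq_of_src _ _
  | succ m ih =>
    intro n hn
    by_cases hnm : (n - b).toNat ≤ m
    · exact ih n hnm
    have hnb : ¬ n ≤ b := by omega
    have e1 : nhAux X G hconc hproj f b n (n+1) =
        cycLift G hconc (hproj n) n
          (f.f n - X.d n (n-1) ≫ nhAux X G hconc hproj f b (n-1) n) := by
      rw [nhAux, dif_pos rfl, dif_neg hnb]
      simp
    have hcyc : ∀ x, G.d n (n-1)
        ((f.f n - X.d n (n-1) ≫ nhAux X G hconc hproj f b (n-1) n) x) = 0 := by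
      have ihn : f.f (n-1) = nhAux X G hconc hproj f b (n-1) (n-1+1) ≫ G.d (n-1+1) (n-1) +
          X.d (n-1) (n-1-1) ≫ nhAux X G hconc hproj f b (n-1-1) (n-1) := ih (n-1) (by omega)
      have hcast : nhAux X G hconc hproj f b (n-1) n =
          nhAux X G hconc hproj f b (n-1) (n-1+1) ≫ (G.XIsoOfEq (show n-1+1 = n by omega)).hom :=
        castSnd (nhAux X G hconc hproj f b) (n-1) (show n-1+1 = n by omega)
      have key : nhAux X G hconc hproj f b (n-1) n ≫ G.d n (n-1) =
          f.f (n-1) - X.d (n-1) (n-1-1) ≫ nhAux X G hconc hproj f b (n-1-1) (n-1) := by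
        rw [hcast, Category.assoc, XIso_d, ihn]
        abel
      have hfc : f.f n ≫ G.d n (n-1) = X.d n (n-1) ≫ f.f (n-1) := f.comm n (n-1)
      have hz : (f.f n - X.d n (n-1) ≫ nhAux X G hconc hproj f b (n-1) n) ≫ G.d n (n-1) = 0 := by
        rw [Preadditive.sub_comp, Category.assoc, key, hfc]
        simp only [Preadditive.comp_sub]
        rw [← Category.assoc, X.d_comp_d]
        simp
      intro x
      exact ConcreteCategory.congr_hom hz x
    rw [e1, cycLift_d G hconc (hproj n) n _ hcyc]
    abel

/-- Main: bounded-below complexes of projectives are DG-projective (null-homotopy). -/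
lemma nullHomotopic_of_boundedBelow {X G : Cx R} (hbb : BoundedBelow X)
    (hproj : ∀ n : ℤ, Projective (X.X n)) (hconc : ConcreteExact G) (f : X ⟶ G) :
    NullHomotopic f := by
  obtain ⟨b, hb⟩ := hbb
  exact ⟨nhAux X G hconc hproj f b, nhAux_rel X G hconc hproj f b hb⟩
end NH2

section ConeI
variable {R : Type u} [Ring R]

open Classical in
/-- Degree-shift identity component used in the cone. -/
noncomputable def coneIaux (X : Cx R) (i j : ℤ) : X.X (i-1) ⟶ X.X j :=
  if h : j + 1 = i then (X.XIsoOfEq (show i - 1 = j by omega)).hom else 0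

/-- The cone of the identity, version receiving `X`: `(coneI X)_i = X_{i-1} × X_i`. -/
noncomputable def coneI (X : Cx R) : Cx R where
  X i := ModuleCat.of R (X.X (i-1) × X.X i)
  d i j := ModuleCat.ofHom <| LinearMap.prod
    ((-(X.d (i-1) (j-1)).hom).comp
      (LinearMap.fst R (X.X (i-1)) (X.X i)))
    ((coneIaux X i j).hom.comp (LinearMap.fst R (X.X (i-1)) (X.X i)) +
      (X.d i j).hom.comp (LinearMap.snd R (X.X (i-1)) (X.X i)))
  shape i j hij := by
    have h0 : ¬ (j + 1 = i) := by simpa using hij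
    have h1 : ¬ ((ComplexShape.down ℤ).Rel (i-1) (j-1)) := by simp; omega
    rw [X.shape _ _ h1, X.shape _ _ hij, coneIaux, dif_neg h0]
    apply ModuleCat.hom_ext
    apply LinearMap.ext
    intro x
    simp
  d_comp_d' i j k hij hjk := by
    simp only [ComplexShape.down_Rel] at hij hjk
    obtain rfl : i = j + 1 := hij.symm
    obtain rfl : j = k + 1 := hjk.symm
    refine ConcreteCategory.hom_ext _ _ ?_
    rintro ⟨a, b⟩
    rw [ModuleCat.comp_apply]
    refine Prod.ext ?_ ?_
    · show -(X.d (k+1-1) (k-1)) (-(X.d (k+1+1-1) (k+1-1)) a) = 0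
      rw [map_neg, neg_neg, ← ModuleCat.comp_apply, X.d_comp_d]
      rfl
    · show coneIaux X (k+1) k (-(X.d (k+1+1-1) (k+1-1)) a) +
        X.d (k+1) k (coneIaux X (k+1+1) (k+1) a + X.d (k+1+1) (k+1) b) = 0
      rw [coneIaux, dif_pos rfl, coneIaux, dif_pos rfl, map_neg, map_add,
        d_XIso_apply X (k+1+1-1) (show k+1-1 = k by omega) a,
        XIso_d_apply X (show k+1+1-1 = k+1 by omega) k a]
      have hz : X.d (k+1) k (X.d (k+1+1) (k+1) b) = 0 :=
        ConcreteCategory.congr_hom (X.d_comp_d (k+1+1) (k+1) k) b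
      rw [hz]
      abel
end ConeI

section ConeI2
variable {R : Type u} [Ring R]

lemma XIso_XIso_apply (X : Cx R) {p q : ℤ} (h₁ : p = q) (h₂ : q = p) (x : X.X p) :
    (X.XIsoOfEq h₂).hom ((X.XIsoOfEq h₁).hom x) = x := by subst h₁; simp

lemma XIso_rfl_apply (X : Cx R) {p : ℤ} (h : p = p) (x : X.X p) :
    (X.XIsoOfEq h).hom x = x := by simp

open Classical in
/-- The contracting homotopy of `coneI X`. -/
noncomputable def coneIsigma (X : Cx R) (i j : ℤ) : (coneI X).X i ⟶ (coneI X).X j :=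
  if h : j = i + 1 then
    ModuleCat.ofHom <| LinearMap.prod
      ((X.XIsoOfEq (show i = j - 1 by omega)).hom.hom.comp (LinearMap.snd R (X.X (i-1)) (X.X i)))
      0
  else 0

lemma coneI_d_apply (X : Cx R) (i j : ℤ) (hij : j + 1 = i) (a : X.X (i-1)) (b : X.X i) :
    ((coneI X).d i j) (a, b) =
      (-(X.d (i-1) (j-1) a), (X.XIsoOfEq (show i-1 = j by omega)).hom a + X.d i j b) := by
  show (LinearMap.prod _ _) (a, b) = _
  rw [LinearMap.prod_apply]
  refine Prod.ext ?_ ?_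
  · rfl
  · show coneIaux X i j a + X.d i j b = _
    rw [coneIaux, dif_pos hij]

lemma dite_apply_pos' {M N : ModuleCat.{u} R} {p : Prop} [Decidable p] (hp : p)
    (t : p → (M ⟶ N)) (e : ¬p → (M ⟶ N)) (x : M) :
    (dite p t e) x = t hp x := by rw [dif_pos hp]

lemma coneIsigma_apply (X : Cx R) (i j : ℤ) (hij : j = i + 1) (a : X.X (i-1)) (b : X.X i) :
    (coneIsigma X i j) (a, b) = ((X.XIsoOfEq (show i = j - 1 by omega)).hom b, 0) := by
  rw [coneIsigma]
  exact dite_apply_pos' hij _ _ _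

/-- The inclusion `X ⟶ coneI X`. -/
noncomputable def coneIinc (X : Cx R) : X ⟶ coneI X where
  f i := ModuleCat.ofHom (LinearMap.prod 0 LinearMap.id)
  comm' i j hij := by
    simp only [ComplexShape.down_Rel] at hij
    refine ConcreteCategory.hom_ext _ _ ?_
    intro x
    show ((coneI X).d i j) ((0 : X.X (i-1)), x) = ((0 : X.X (j-1)), X.d i j x)
    rw [coneI_d_apply X i j hij]
    refine Prod.ext ?_ ?_
    · simp
    · show (X.XIsoOfEq _).hom 0 + X.d i j x = X.d i j x
      rw [map_zero, zero_add]

lemma coneI_contractible (X : Cx R) : NullHomotopic (𝟙 (coneI X)) := by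
  refine ⟨coneIsigma X, fun n => ?_⟩
  refine ConcreteCategory.hom_ext _ _ ?_
  intro x
  rw [mc_add_apply, ModuleCat.comp_apply, ModuleCat.comp_apply,
    HomologicalComplex.id_f]
  obtain ⟨a, b⟩ := x
  rw [coneIsigma_apply X n (n+1) rfl a b,
    coneI_d_apply X (n+1) n rfl,
    coneI_d_apply X n (n-1) (by omega) a b,
    coneIsigma_apply X (n-1) n (by omega),
    XIso_d_apply X (show (n:ℤ) = n+1-1 by omega) (n-1) b,
    XIso_XIso_apply X (show (n:ℤ) = n+1-1 by omega) (show (n:ℤ)+1-1 = n by omega) b,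
    map_zero, add_zero]
  simp only [XIso_rfl_apply]
  refine Prod.ext ?_ ?_
  · show a = -(X.d n (n-1) b) + (a + X.d n (n-1) b)
    abel
  · show b = b + 0
    rw [add_zero]
end ConeI2

section ProjLemma
variable {R : Type u} [Ring R]

/-- A contractible complex with projective components is a projective object. -/
lemma projective_of_contractible (P : Cx R) (hcon : NullHomotopic (𝟙 P))
    (hproj : ∀ n : ℤ, Projective (P.X n)) : Projective P := by
  obtain ⟨σ, hσ⟩ := hcon
  constructor
  intro E Xc u e he
  haveI : ∀ n : ℤ, Epi (e.f n) := fun n => inferInstance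
  let τ : ∀ i j : ℤ, P.X i ⟶ E.X j := fun i j =>
    letI := hproj i
    Projective.factorThru (σ i j ≫ u.f j) (e.f j)
  have hτ : ∀ i j, τ i j ≫ e.f j = σ i j ≫ u.f j := fun i j => by
    letI := hproj i
    exact Projective.factorThru_comp _ _
  refine ⟨{ f := fun n => τ n (n+1) ≫ E.d (n+1) n + P.d n (n-1) ≫ τ (n-1) n,
            comm' := ?_ }, ?_⟩
  · intro i j hij
    simp only [ComplexShape.down_Rel] at hij
    obtain rfl : i = j + 1 := hij.symm
    simp only [Preadditive.add_comp, Preadditive.comp_add, Category.assoc]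
    rw [E.d_comp_d, comp_zero, zero_add]
    rw [← Category.assoc (P.d (j+1) j) (P.d j (j-1)), P.d_comp_d, zero_comp, add_zero]
    rw [castFst τ (show (j:ℤ)+1-1 = j by omega) (j+1)]
    simp only [← Category.assoc]
    rw [d_XIso P (j+1) (show (j:ℤ)+1-1 = j by omega)]
  · apply HomologicalComplex.hom_ext
    intro n
    rw [HomologicalComplex.comp_f]
    dsimp only
    rw [Preadditive.add_comp, Category.assoc, Category.assoc]
    have he1 : E.d (n+1) n ≫ e.f n = e.f (n+1) ≫ Xc.d (n+1) n := (e.comm (n+1) n).symm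
    rw [he1, ← Category.assoc (τ n (n+1)), hτ n (n+1), hτ (n-1) n]
    rw [Category.assoc, (u.comm (n+1) n)]
    have : σ n (n+1) ≫ P.d (n+1) n ≫ u.f n + P.d n (n-1) ≫ σ (n-1) n ≫ u.f n =
        (σ n (n+1) ≫ P.d (n+1) n + P.d n (n-1) ≫ σ (n-1) n) ≫ u.f n := by
      rw [Preadditive.add_comp, Category.assoc, Category.assoc]
    rw [this, ← hσ n, HomologicalComplex.id_f, Category.id_comp]

/-- Components of `coneI X` are projective if those of `X` are. -/
lemma coneI_X_projective (X : Cx R) (hproj : ∀ n : ℤ, Projective (X.X n)) (n : ℤ) :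
    Projective ((coneI X).X n) := by
  have p1 : Projective (ModuleCat.of R (X.X (n-1))) :=
    Projective.of_iso (Iso.refl _) (hproj (n-1))
  have p2 : Projective (ModuleCat.of R (X.X n)) :=
    Projective.of_iso (Iso.refl _) (hproj n)
  haveI m1 : Module.Projective R (X.X (n-1)) := (IsProjective.iff_projective _).mpr p1
  haveI m2 : Module.Projective R (X.X n) := (IsProjective.iff_projective _).mpr p2
  haveI : Module.Projective R ((X.X (n-1)) × (X.X n)) := inferInstance
  exact (IsProjective.iff_projective _).mp this

/-- The descent of a null-homotopic map to the cone. -/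
noncomputable def coneIdesc {X F : Cx R} (f : X ⟶ F) (s : ∀ i j : ℤ, X.X i ⟶ F.X j)
    (hs : ∀ n : ℤ, f.f n = s n (n+1) ≫ F.d (n+1) n + X.d n (n-1) ≫ s (n-1) n) :
    coneI X ⟶ F where
  f i := ModuleCat.ofHom <| (s (i-1) i).hom.comp (LinearMap.fst R (X.X (i-1)) (X.X i)) +
    (f.f i).hom.comp (LinearMap.snd R (X.X (i-1)) (X.X i))
  comm' i j hij := by
    simp only [ComplexShape.down_Rel] at hij
    obtain rfl : i = j + 1 := hij.symm
    have hs' : ∀ n (y : X.X n), f.f n y = F.d (n+1) n (s n (n+1) y) + s (n-1) n (X.d n (n-1) y) :=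
      fun n y => by
        have := ConcreteCategory.congr_hom (hs n) y
        simpa [mc_add_apply] using this
    refine ConcreteCategory.hom_ext _ _ ?_
    rintro ⟨a, b⟩
    erw [ModuleCat.comp_apply, ModuleCat.comp_apply ((coneI X).d (j+1) j)]
    rw [coneI_d_apply X (j+1) j rfl a b]
    show F.d (j+1) j (s (j+1-1) (j+1) a + f.f (j+1) b) =
      s (j-1) j (-(X.d (j+1-1) (j-1) a)) +
        f.f j ((X.XIsoOfEq (show (j:ℤ)+1-1 = j by omega)).hom a + X.d (j+1) j b)
    rw [map_add (ConcreteCategory.hom (F.d (j+1) j)), map_neg (ConcreteCategory.hom (s (j-1) j)),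
      map_add (ConcreteCategory.hom (f.f j))]
    have hfc : F.d (j+1) j (f.f (j+1) b) = f.f j (X.d (j+1) j b) :=
      ConcreteCategory.congr_hom (f.comm (j+1) j) b
    rw [hfc]
    -- cast pieces
    have e1 : s (j+1-1) (j+1) a = s j (j+1) ((X.XIsoOfEq (show (j:ℤ)+1-1 = j by omega)).hom a) :=
      ConcreteCategory.congr_hom (castFst s (show (j:ℤ)+1-1 = j by omega) (j+1)) a
    have e2 : X.d (j+1-1) (j-1) a = X.d j (j-1) ((X.XIsoOfEq (show (j:ℤ)+1-1 = j by omega)).hom a) :=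
      ConcreteCategory.congr_hom (castFst X.d (show (j:ℤ)+1-1 = j by omega) (j-1)) a
    rw [e1, e2]
    generalize ((X.XIsoOfEq (show (j:ℤ)+1-1 = j by omega)).hom a) = y
    rw [hs' j y]
    abel

/-- **Key lemma**: a null-homotopic map out of a complex with projective components
factors through a projective complex. -/
lemma factorsThroughProjective_of_nullHomotopic {X F : Cx R}
    (hproj : ∀ n : ℤ, Projective (X.X n)) {f : X ⟶ F} (hf : NullHomotopic f) :
    FactorsThroughProjective f := by
  obtain ⟨s, hs⟩ := hf
  refine ⟨coneI X, coneIinc X, coneIdesc f s hs,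
    projective_of_contractible _ (coneI_contractible X) (coneI_X_projective X hproj), ?_⟩
  apply HomologicalComplex.hom_ext
  intro n
  rw [HomologicalComplex.comp_f]
  refine ConcreteCategory.hom_ext _ _ ?_
  intro x
  rw [ModuleCat.comp_apply]
  show (coneIdesc f s hs).f n ((0 : X.X (n-1)), x) = f.f n x
  show s (n-1) n (0 : X.X (n-1)) + f.f n x = f.f n x
  rw [map_zero, zero_add]
end ProjLemma

section ConeP
variable {R : Type u} [Ring R]

open Classical in
/-- Degree-shift identity component used in the projection cone. -/
noncomputable def conePaux (X : Cx R) (i j : ℤ) : X.X i ⟶ X.X (j+1) :=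
  if h : j + 1 = i then (X.XIsoOfEq h.symm).hom else 0

/-- The cone of the identity, version projecting onto `X`: `(coneP X)_i = X_i × X_{i+1}`. -/
noncomputable def coneP (X : Cx R) : Cx R where
  X i := ModuleCat.of R (X.X i × X.X (i+1))
  d i j := ModuleCat.ofHom <| LinearMap.prod
    ((X.d i j).hom.comp (LinearMap.fst R (X.X i) (X.X (i+1))))
    ((conePaux X i j).hom.comp (LinearMap.fst R (X.X i) (X.X (i+1))) -
      (X.d (i+1) (j+1)).hom.comp (LinearMap.snd R (X.X i) (X.X (i+1))))
  shape i j hij := by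
    have h0 : ¬ (j + 1 = i) := by simpa using hij
    have h1 : ¬ ((ComplexShape.down ℤ).Rel (i+1) (j+1)) := by simp; omega
    rw [X.shape _ _ h1, X.shape _ _ hij, conePaux, dif_neg h0]
    apply ModuleCat.hom_ext
    apply LinearMap.ext
    intro x
    simp
  d_comp_d' i j k hij hjk := by
    simp only [ComplexShape.down_Rel] at hij hjk
    obtain rfl : i = j + 1 := hij.symm
    obtain rfl : j = k + 1 := hjk.symm
    refine ConcreteCategory.hom_ext _ _ ?_
    rintro ⟨a, b⟩
    rw [ModuleCat.comp_apply]
    refine Prod.ext ?_ ?_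
    · show X.d (k+1) k (X.d (k+1+1) (k+1) ((LinearMap.fst R _ _) (a, b))) = 0
      have hz : X.d (k+1) k (X.d (k+1+1) (k+1) a) = 0 :=
        ConcreteCategory.congr_hom (X.d_comp_d (k+1+1) (k+1) k) a
      exact hz
    · show conePaux X (k+1) k (X.d (k+1+1) (k+1) a) -
        X.d (k+1+1) (k+1) (conePaux X (k+1+1) (k+1) a - X.d (k+1+1+1) (k+1+1) b) = 0
      rw [conePaux, dif_pos rfl, conePaux, dif_pos rfl, map_sub]
      rw [XIso_rfl_apply X (rfl : (k:ℤ)+1+1 = k+1+1)]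
      rw [d_XIso_apply X (k+1+1) (show (k:ℤ)+1 = k + 1 from rfl) a]
      have hz : X.d (k+1+1) (k+1) (X.d (k+1+1+1) (k+1+1) b) = 0 :=
        ConcreteCategory.congr_hom (X.d_comp_d (k+1+1+1) (k+1+1) (k+1)) b
      rw [hz, sub_zero, sub_self]

lemma coneP_d_apply (X : Cx R) (i j : ℤ) (hij : j + 1 = i) (a : X.X i) (b : X.X (i+1)) :
    ((coneP X).d i j) (a, b) =
      (X.d i j a, (X.XIsoOfEq hij.symm).hom a - X.d (i+1) (j+1) b) := by
  show (LinearMap.prod _ _) (a, b) = _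
  rw [LinearMap.prod_apply]
  refine Prod.ext ?_ ?_
  · rfl
  · show conePaux X i j a - X.d (i+1) (j+1) b = _
    rw [conePaux, dif_pos hij]

/-- The projection `coneP X ⟶ X`. -/
noncomputable def conePpi (X : Cx R) : coneP X ⟶ X where
  f i := ModuleCat.ofHom (LinearMap.fst R (X.X i) (X.X (i+1)))
  comm' i j hij := by
    simp only [ComplexShape.down_Rel] at hij
    refine ConcreteCategory.hom_ext _ _ ?_
    rintro ⟨a, b⟩
    erw [ModuleCat.comp_apply, ModuleCat.comp_apply]

lemma coneP_concreteExact (X : Cx R) : ConcreteExact (coneP X) := by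
  rintro n ⟨a, b⟩ hab
  rw [coneP_d_apply X n (n-1) (by omega) a b] at hab
  have h1 : X.d n (n-1) a = 0 := congrArg Prod.fst hab
  have h2 : (X.XIsoOfEq (show (n:ℤ) = n-1+1 by omega)).hom a = X.d (n+1) (n-1+1) b :=
    sub_eq_zero.mp (congrArg Prod.snd hab)
  refine ⟨(b, 0), ?_⟩
  rw [coneP_d_apply X (n+1) n rfl b 0]
  refine Prod.ext ?_ ?_
  · show X.d (n+1) n b = a
    have := congrArg (X.XIsoOfEq (show (n:ℤ)-1+1 = n by omega)).hom h2
    rw [XIso_XIso_apply X (show (n:ℤ) = n-1+1 by omega) (show (n:ℤ)-1+1 = n by omega) a] at this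
    rw [d_XIso_apply X (n+1) (show (n:ℤ)-1+1 = n by omega) b] at this
    exact this.symm
  · show (X.XIsoOfEq _).hom b - X.d (n+1+1) (n+1) 0 = b
    rw [map_zero, sub_zero, XIso_rfl_apply]

/-- A projective complex is exact. -/
lemma concreteExact_of_projective (Q : Cx R) (hQ : Projective Q) : ConcreteExact Q := by
  haveI : Epi (conePpi Q) := HomologicalComplex.epi_of_epi_f _ (fun n =>
    (ModuleCat.epi_iff_surjective _).mpr (fun a => ⟨(a, 0), rfl⟩))
  letI := hQ
  let j : Q ⟶ coneP Q := Projective.factorThru (𝟙 Q) (conePpi Q)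
  have hj : j ≫ conePpi Q = 𝟙 Q := Projective.factorThru_comp _ _
  intro n x hx
  have hc : ((coneP Q).d n (n-1)) (j.f n x) = 0 := by
    have := ConcreteCategory.congr_hom (j.comm n (n-1)) x
    rw [ModuleCat.comp_apply, ModuleCat.comp_apply] at this
    rw [show ((coneP Q).d n (n-1)) (j.f n x) = j.f (n-1) (Q.d n (n-1) x) from this, hx, map_zero]
  obtain ⟨y, hy⟩ := coneP_concreteExact Q n (j.f n x) hc
  refine ⟨(conePpi Q).f (n+1) y, ?_⟩
  have hcomm := ConcreteCategory.congr_hom ((conePpi Q).comm (n+1) n) y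
  rw [ModuleCat.comp_apply, ModuleCat.comp_apply] at hcomm
  have h1 : (j.f n ≫ (conePpi Q).f n) = 𝟙 (Q.X n) := by
    rw [← HomologicalComplex.comp_f, hj, HomologicalComplex.id_f]
  calc Q.d (n+1) n ((conePpi Q).f (n+1) y) = (conePpi Q).f n ((coneP Q).d (n+1) n y) :=
        hcomm.symm
    _ = (conePpi Q).f n (j.f n x) := by rw [hy]
    _ = x := ConcreteCategory.congr_hom h1 x
end ConeP

section Sphere
variable {R : Type u} [Ring R]

lemma projective_of_isZero {C : Type*} [Category C] [HasZeroMorphisms C] {P : C} (h : IsZero P) : Projective P :=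
  ⟨fun _ _ _ => ⟨0, h.eq_of_src _ _⟩⟩

/-- The sphere complex `S^n(R)`. -/
noncomputable def sphere (n : ℤ) : Cx R :=
  (HomologicalComplex.single (ModuleCat.{u} R) (ComplexShape.down ℤ) n).obj (ModuleCat.of R R)

lemma sphere_bounded (n : ℤ) : BoundedCx (sphere (R := R) n) := by
  constructor
  · exact ⟨n+1, fun m hm => HomologicalComplex.isZero_single_obj_X _ n _ m (by omega)⟩
  · exact ⟨n-1, fun m hm => HomologicalComplex.isZero_single_obj_X _ n _ m (by omega)⟩

lemma sphere_projective (n m : ℤ) : Projective ((sphere (R := R) n).X m) := by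
  by_cases hm : m = n
  · subst hm
    refine Projective.of_iso (HomologicalComplex.singleObjXSelf
      (ComplexShape.down ℤ) m (ModuleCat.of R R)).symm ?_
    exact (IsProjective.iff_projective _).mp inferInstance
  · exact projective_of_isZero (HomologicalComplex.isZero_single_obj_X _ n _ m hm)

/-- The chain map `S^n(R) ⟶ F` determined by a cycle `x ∈ Z_n(F)`. -/
noncomputable def sphereMap (F : Cx R) (n : ℤ) (x : F.X n) (hx : F.d n (n-1) x = 0) :
    sphere (R := R) n ⟶ F :=
  HomologicalComplex.mkHomFromSingle (ModuleCat.ofHom (LinearMap.toSpanSingleton R (F.X n) x))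
    (fun i hi => by
      simp only [ComplexShape.down_Rel] at hi
      refine ConcreteCategory.hom_ext _ _ ?_
      intro r
      have h0 : F.d n i x = 0 := by
        rw [← d_XIso_apply F n (show (n:ℤ)-1 = i by omega) x, hx, map_zero]
      show F.d n i (r • x) = (0 : ModuleCat.of R R ⟶ F.X i) r
      rw [map_smul, h0, smul_zero]
      rfl)

/-- If all sphere maps factor through projectives, the complex is exact. -/
lemma concreteExact_of_sphereFactor (F : Cx R)
    (h : ∀ n : ℤ, ∀ f : sphere (R := R) n ⟶ F, FactorsThroughProjective f) :
    ConcreteExact F := by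
  intro n x hx
  obtain ⟨Q, g, hmap, hQ, hfac⟩ := h n (sphereMap F n x hx)
  set e := HomologicalComplex.singleObjXSelf (ComplexShape.down ℤ) n (ModuleCat.of R R)
  set v := e.inv (1 : R) with hv
  have hz : Q.d n (n-1) (g.f n v) = 0 := by
    have h4 : Q.d n (n-1) (g.f n v) = g.f (n-1) ((sphere (R := R) n).d n (n-1) v) :=
      ConcreteCategory.congr_hom (g.comm n (n-1)) v
    have hd : (sphere (R := R) n).d n (n-1) = 0 := by
      exact (HomologicalComplex.isZero_single_obj_X _ n _ (n-1) (by omega)).eq_of_tgt _ _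
    rw [h4, hd]
    exact map_zero (ConcreteCategory.hom (g.f (n-1)))
  obtain ⟨w, hw⟩ := concreteExact_of_projective Q hQ n (g.f n v) hz
  refine ⟨hmap.f (n+1) w, ?_⟩
  have hcomm : F.d (n+1) n (hmap.f (n+1) w) = hmap.f n (Q.d (n+1) n w) :=
    ConcreteCategory.congr_hom (hmap.comm (n+1) n) w
  have hfacn : g.f n ≫ hmap.f n = (sphereMap F n x hx).f n := by
    rw [← HomologicalComplex.comp_f, hfac]
  have hkey : e.inv ≫ (sphereMap F n x hx).f n =
      ModuleCat.ofHom (LinearMap.toSpanSingleton R (F.X n) x) := by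
    rw [sphereMap, HomologicalComplex.mkHomFromSingle_f, Iso.inv_hom_id_assoc]
  have hsph : (sphereMap F n x hx).f n v = x := by
    have h5 : (sphereMap F n x hx).f n (e.inv (1:R)) = (1:R) • x :=
      ConcreteCategory.congr_hom hkey (1:R)
    calc (sphereMap F n x hx).f n v = (1:R) • x := h5
      _ = x := one_smul _ _
  calc F.d (n+1) n (hmap.f (n+1) w)
      = hmap.f n (Q.d (n+1) n w) := hcomm
    _ = hmap.f n (g.f n v) := by rw [hw]
    _ = (sphereMap F n x hx).f n v := ConcreteCategory.congr_hom hfacn v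
    _ = x := hsph
end Sphere

section Final
variable {R : Type u} [Ring R]

/-- `F` is isomorphic to its shift by `0`. -/
noncomputable def shiftZeroIso (F : Cx R) : F ≅ shiftCx F 0 :=
  HomologicalComplex.Hom.isoOfComponents (fun i => F.XIsoOfEq (show i = i - 0 by omega))
    (fun i j _ => by
      have hd : (shiftCx F 0).d i j = F.d (i-0) (j-0) := by
        show (Int.negOnePow 0) • F.d (i-0) (j-0) = _
        rw [Int.negOnePow_zero, one_smul]
      rw [hd]
      exact (XIso_d F (show i = i - 0 by omega) (j-0)).trans
        (d_XIso F i (show j = j - 0 by omega)).symm)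

lemma nullHomotopic_of_comp {X A B : Cx R} (φ : A ⟶ B) (ψ : B ⟶ A) (hφψ : φ ≫ ψ = 𝟙 A)
    (f : X ⟶ A) (h : NullHomotopic (f ≫ φ)) : NullHomotopic f := by
  obtain ⟨s, hs⟩ := h
  refine ⟨fun i j => s i j ≫ ψ.f j, fun n => ?_⟩
  have h1 : (f ≫ φ).f n ≫ ψ.f n = f.f n := by
    rw [← HomologicalComplex.comp_f, Category.assoc, hφψ, Category.comp_id]
  calc f.f n = (f ≫ φ).f n ≫ ψ.f n := h1.symm
    _ = (s n (n+1) ≫ B.d (n+1) n + X.d n (n-1) ≫ s (n-1) n) ≫ ψ.f n := by rw [← hs n]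
    _ = (s n (n+1) ≫ ψ.f (n+1)) ≫ A.d (n+1) n + X.d n (n-1) ≫ s (n-1) n ≫ ψ.f n := by
        rw [Preadditive.add_comp]
        simp only [Category.assoc]
        rw [← ψ.comm (n+1) n]
end Final

/-- Corollary 3.8: characterization of exact complexes. -/
theorem stmt15 (R : Type u) [Ring R] (F : Cx R) :
    List.TFAE [
      IsExactCx F,
      ∀ X : Cx R, BoundedCx X → (∀ n : ℤ, Projective (X.X n)) →
        ∀ f : X ⟶ F, FactorsThroughProjective f,
      ∀ X : Cx R, BoundedBelow X → (∀ n : ℤ, Projective (X.X n)) →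
        ∀ f : X ⟶ F, FactorsThroughProjective f,
      ∀ X : Cx R, (∀ n : ℤ, Projective (X.X n)) →
        (∀ G : Cx R, IsExactCx G → ∀ k : ℤ, ∀ g : X ⟶ shiftCx G k, NullHomotopic g) →
        ∀ f : X ⟶ F, FactorsThroughProjective f] := by
  tfae_have 1 → 3 := by
    intro h1 X hbb hproj f
    exact factorsThroughProjective_of_nullHomotopic hproj
      (nullHomotopic_of_boundedBelow hbb hproj ((isExactCx_iff_concreteExact F).mp h1) f)
  tfae_have 3 → 2 := by
    intro h3 X hb hproj f
    exact h3 X hb.2 hproj f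
  tfae_have 2 → 1 := by
    intro h2
    rw [isExactCx_iff_concreteExact]
    exact concreteExact_of_sphereFactor F
      (fun n f => h2 _ (sphere_bounded n) (sphere_projective n) f)
  tfae_have 1 → 4 := by
    intro h1 X hproj hnull f
    have hnh := hnull F h1 0 (f ≫ (shiftZeroIso F).hom)
    exact factorsThroughProjective_of_nullHomotopic hproj
      (nullHomotopic_of_comp _ _ (shiftZeroIso F).hom_inv_id f hnh)
  tfae_have 4 → 3 := by
    intro h4 X hbb hproj f
    exact h4 X hproj (fun G hG k g => nullHomotopic_of_boundedBelow hbb hproj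
      (concreteExact_shiftCx ((isExactCx_iff_concreteExact G).mp hG) k) g) f
  tfae_finish
end

section
/- Let R be a ring over which every injective left R-module is flat (an IF ring) and which is not von Neumann regular. Then there exist a finitely presented left R-module M which is not projective and an exact complex N of left R-modules such that N ∈ Pr⁻¹_C(M̄) while Z_1(N) ∉ Pr⁻¹_Mod(M); in particular the converse of the statement "if M is bounded below and Z_n(N) ∈ Pr⁻¹_Mod(M_n) for all n then N ∈ Pr⁻¹_C(M)" fails. -/
open CategoryTheory CategoryTheory.Limits ZeroObject

universe u

variable {R : Type u} [Ring R]

namespace Stmt17Aux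

section TripleCx

noncomputable def tObj (A B C : ModuleCat.{u} R) (i : ℤ) : ModuleCat.{u} R :=
  if i = 2 then A else if i = 1 then B else if i = 0 then C else 0

variable (A B C : ModuleCat.{u} R)

lemma tObj_two {i : ℤ} (h : i = 2) : tObj A B C i = A := by simp [tObj, h]
lemma tObj_one {i : ℤ} (h : i = 1) : tObj A B C i = B := by simp [tObj, h]
lemma tObj_zero {i : ℤ} (h : i = 0) : tObj A B C i = C := by simp [tObj, h]
lemma tObj_ne (i : ℤ) (h2 : i ≠ 2) (h1 : i ≠ 1) (h0 : i ≠ 0) : tObj A B C i = 0 := by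
  simp [tObj, h2, h1, h0]

/-- 3-term complex with `A, B, C` in degrees `2, 1, 0`. -/
noncomputable def tripleCx (f : A ⟶ B) (g : B ⟶ C) (hfg : f ≫ g = 0) : Cx R where
  X := tObj A B C
  d i j :=
    if h : i = 2 ∧ j = 1 then
      eqToHom (tObj_two A B C h.1) ≫ f ≫ eqToHom (tObj_one A B C h.2).symm
    else if h : i = 1 ∧ j = 0 then
      eqToHom (tObj_one A B C h.1) ≫ g ≫ eqToHom (tObj_zero A B C h.2).symm
    else 0
  shape i j hij := by
    simp only [ComplexShape.down_Rel] at hij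
    rw [dif_neg (by omega), dif_neg (by omega)]
  d_comp_d' i j k hij hjk := by
    simp only [ComplexShape.down_Rel] at hij hjk
    by_cases h2 : i = 2
    · have hj : j = 1 := by omega
      have hk : k = 0 := by omega
      subst h2 hj hk
      rw [dif_pos ⟨rfl, rfl⟩, dif_neg (by omega), dif_pos ⟨rfl, rfl⟩]
      simp only [Category.assoc, eqToHom_trans_assoc, eqToHom_refl, Category.id_comp,
        reassoc_of% hfg, zero_comp, comp_zero]
    · by_cases h1 : i = 1
      · have hj : j = 0 := by omega
        have hk : k = -1 := by omega
        subst h1 hj hk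
        rw [dif_neg (by omega), dif_pos ⟨rfl, rfl⟩, dif_neg (by omega), dif_neg (by omega),
          comp_zero]
      · rw [dif_neg (by omega), dif_neg (by omega), zero_comp]

variable (f : A ⟶ B) (g : B ⟶ C) (hfg : f ≫ g = 0)

lemma tripleCx_X (i : ℤ) : (tripleCx A B C f g hfg).X i = tObj A B C i := rfl

lemma tripleCx_X_isZero (n : ℤ) (h2 : n ≠ 2) (h1 : n ≠ 1) (h0 : n ≠ 0) :
    IsZero ((tripleCx A B C f g hfg).X n) := by
  rw [tripleCx_X, tObj_ne A B C n h2 h1 h0]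
  exact isZero_zero _

lemma tripleCx_d21 : (tripleCx A B C f g hfg).d 2 1 =
    eqToHom (tObj_two A B C rfl) ≫ f ≫ eqToHom (tObj_one A B C rfl).symm := by
  dsimp only [tripleCx]
  rw [dif_pos ⟨rfl, rfl⟩]

lemma tripleCx_d10' (j : ℤ) (hj : j = 0) : (tripleCx A B C f g hfg).d 1 j =
    eqToHom (tObj_one A B C rfl) ≫ g ≫ eqToHom (tObj_zero A B C hj).symm := by
  subst hj
  dsimp only [tripleCx]
  rw [dif_neg (by omega), dif_pos ⟨rfl, rfl⟩]

lemma tripleCx_d10 : (tripleCx A B C f g hfg).d 1 0 =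
    eqToHom (tObj_one A B C rfl) ≫ g ≫ eqToHom (tObj_zero A B C rfl).symm :=
  tripleCx_d10' A B C f g hfg 0 rfl

lemma tripleCx_d_eq_zero (i j : ℤ) (h21 : ¬(i = 2 ∧ j = 1)) (h10 : ¬(i = 1 ∧ j = 0)) :
    (tripleCx A B C f g hfg).d i j = 0 := by
  dsimp only [tripleCx]
  rw [dif_neg h21, dif_neg h10]
  rfl

attribute [reducible] tripleCx

lemma isExactCx_tripleCx [Mono f] (hrk : LinearMap.range f.hom = LinearMap.ker g.hom)
    (hg : Function.Surjective g) : IsExactCx (tripleCx A B C f g hfg) := by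
  intro n
  by_cases h2 : n = 2
  · subst h2
    have hm : Mono ((tripleCx A B C f g hfg).d 2 1) := by
      rw [tripleCx_d21]; infer_instance
    rw [HomologicalComplex.exactAt_iff' _ 3 2 1 (by simp) (by simp),
      ShortComplex.moduleCat_exact_iff]
    intro x hx
    refine ⟨0, ?_⟩
    have hx0 : x = 0 := (ModuleCat.mono_iff_injective _).mp hm (hx.trans (map_zero _).symm)
    simp [hx0]
  · by_cases h1 : n = 1
    · subst h1
      rw [HomologicalComplex.exactAt_iff' _ 2 1 0 (by simp) (by simp)]
      refine ShortComplex.exact_of_iso (Iso.symm ?_)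
        ((ShortComplex.moduleCat_exact_iff_range_eq_ker (ShortComplex.mk f g hfg)).mpr hrk)
      refine ShortComplex.isoMk (eqToIso (tObj_two A B C rfl)) (eqToIso (tObj_one A B C rfl))
        (eqToIso (tObj_zero A B C rfl)) ?_ ?_
      · have hf' : (HomologicalComplex.sc' (tripleCx A B C f g hfg) 2 1 0).f
            = (tripleCx A B C f g hfg).d 2 1 := rfl
        rw [hf', tripleCx_d21]
        show eqToHom (tObj_two A B C rfl) ≫ f = (eqToHom (tObj_two A B C rfl) ≫ f ≫
          eqToHom (tObj_one A B C rfl).symm) ≫ eqToHom (tObj_one A B C rfl)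
        simp
      · have hg' : (HomologicalComplex.sc' (tripleCx A B C f g hfg) 2 1 0).g
            = (tripleCx A B C f g hfg).d 1 0 := rfl
        rw [hg', tripleCx_d10]
        show eqToHom (tObj_one A B C rfl) ≫ g = (eqToHom (tObj_one A B C rfl) ≫ g ≫
          eqToHom (tObj_zero A B C rfl).symm) ≫ eqToHom (tObj_zero A B C rfl)
        simp
    · by_cases h0 : n = 0
      · subst h0
        have he : Epi ((tripleCx A B C f g hfg).d 1 0) := by
          rw [tripleCx_d10]
          have : Epi g := (ModuleCat.epi_iff_surjective g).mpr hg
          infer_instance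
        rw [HomologicalComplex.exactAt_iff' _ 1 0 (-1) (by simp) (by simp),
          ShortComplex.moduleCat_exact_iff]
        intro x _
        exact (ModuleCat.epi_iff_surjective _).mp he x
      · rw [HomologicalComplex.exactAt_iff]
        exact ShortComplex.exact_of_isZero_X₂ _ (tripleCx_X_isZero A B C f g hfg n h2 h1 h0)

/-- `A` is a retract of the cycles in degree `1` of the triple complex. -/
lemma cycles_retract [Mono f] (hrk : LinearMap.range f.hom = LinearMap.ker g.hom) :
    ∃ (u : A ⟶ cyclesAt (tripleCx A B C f g hfg) 1)
      (r : cyclesAt (tripleCx A B C f g hfg) 1 ⟶ A), u ≫ r = 𝟙 A := by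
  have h1 : (tripleCx A B C f g hfg).X 1 = B := tObj_one A B C rfl
  have h0 : (tripleCx A B C f g hfg).X (1 - 1) = C :=
    tObj_zero A B C (show (1 - 1 : ℤ) = 0 by norm_num)
  let e1 : (tripleCx A B C f g hfg).X 1 ⟶ B := eqToHom h1
  let e1' : B ⟶ (tripleCx A B C f g hfg).X 1 := eqToHom h1.symm
  let e0' : C ⟶ (tripleCx A B C f g hfg).X (1 - 1) := eqToHom h0.symm
  have hk : (tripleCx A B C f g hfg).d 1 (1 - 1) = e1 ≫ g ≫ e0' :=
    tripleCx_d10' A B C f g hfg (1 - 1) (by norm_num)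
  have hfin : Function.Injective f := (ModuleCat.mono_iff_injective f).mp inferInstance
  have he0inj : Function.Injective e0' :=
    (ModuleCat.mono_iff_injective e0').mp inferInstance
  have he1e1 : ∀ y : B, e1 (e1' y) = y := by
    intro y
    have h : e1' ≫ e1 = 𝟙 B := by simp [e1, e1']
    calc e1 (e1' y) = (e1' ≫ e1) y := rfl
    _ = y := by rw [h]; rfl
  have hgf : ∀ m : A, g (f m) = 0 := by
    intro m
    have := LinearMap.congr_fun (congrArg ModuleCat.Hom.hom hfg) m
    simpa using this
  have hcomp : ∀ m : A, (tripleCx A B C f g hfg).d 1 (1 - 1) (e1' (f m)) = 0 := by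
    intro m
    rw [hk]
    show e0' (g (e1 (e1' (f m)))) = 0
    rw [he1e1, hgf, map_zero]
  refine ⟨ModuleCat.ofHom (LinearMap.codRestrict
    (LinearMap.ker ((tripleCx A B C f g hfg).d 1 (1 - 1)).hom)
    (f ≫ e1').hom fun m => hcomp m), ?_, ?_⟩
  · refine ModuleCat.ofHom ((LinearEquiv.ofInjective f.hom hfin).symm.toLinearMap.comp
      (LinearMap.codRestrict (LinearMap.range f.hom)
        (e1.hom.comp
          (LinearMap.ker ((tripleCx A B C f g hfg).d 1 (1 - 1)).hom).subtype) fun x => ?_))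
    have hxx : e0' (g (e1 x.1)) = 0 := by
      show (e1 ≫ g ≫ e0') x.1 = 0
      rw [← hk]
      exact x.2
    have hg0 : g (e1 x.1) = 0 := by
      apply he0inj
      rw [hxx, map_zero]
    show e1 x.1 ∈ LinearMap.range f.hom
    exact hrk.symm ▸ (LinearMap.mem_ker.mpr hg0)
  · ext m
    show (LinearEquiv.ofInjective f.hom hfin).symm _ = m
    rw [LinearEquiv.symm_apply_eq]
    apply Subtype.ext
    show e1 (e1' (f m)) = _
    rw [he1e1, LinearEquiv.ofInjective_apply]

end TripleCx


section DoubleCx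

variable (M : ModuleCat.{u} R)

lemma doubleCx_X_one {i : ℤ} (h : i = 1) : (doubleCx M 0).X i = M :=
  if_pos (Or.inl (by omega))

lemma doubleCx_X_zero {i : ℤ} (h : i = 0) : (doubleCx M 0).X i = M :=
  if_pos (Or.inr h)

lemma doubleCx_X_ne (i : ℤ) (h1 : i ≠ 1) (h0 : i ≠ 0) : (doubleCx M 0).X i = 0 :=
  if_neg (by omega)

lemma doubleCx_X_isZero (i : ℤ) (h1 : i ≠ 1) (h0 : i ≠ 0) : IsZero ((doubleCx M 0).X i) := by
  rw [doubleCx_X_ne M i h1 h0]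
  exact isZero_zero _

lemma doubleCx_d_one_zero : (doubleCx M 0).d 1 0 =
    eqToHom (doubleCx_X_one M rfl) ≫ eqToHom (doubleCx_X_zero M rfl).symm := by
  dsimp only [doubleCx]
  rw [dif_pos ⟨by omega, rfl⟩]

lemma doubleCx_d_ne (i j : ℤ) (h : ¬(i = 1 ∧ j = 0)) : (doubleCx M 0).d i j = 0 := by
  dsimp only [doubleCx]
  rw [dif_neg (by omega)]
  rfl

/-- The disk complex on a projective module is a projective complex. -/
lemma projective_doubleCx (B : ModuleCat.{u} R) (hB : Projective B) :
    Projective (doubleCx B 0) := by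
  constructor
  intro Y Z fc ec he
  have hPB : Projective ((doubleCx B 0).X 1) :=
    Projective.of_iso (eqToIso (doubleCx_X_one B rfl)).symm hB
  obtain ⟨u, hu⟩ := hPB.factors (fc.f 1) (ec.f 1)
  let Lf : ∀ n : ℤ, (doubleCx B 0).X n ⟶ Y.X n := fun n =>
    if hn : n = 1 then
      eqToHom (congrArg (doubleCx B 0).X hn) ≫ u ≫ eqToHom (congrArg Y.X hn).symm
    else if hn : n = 0 then
      eqToHom (congrArg (doubleCx B 0).X hn) ≫ eqToHom (doubleCx_X_zero B rfl) ≫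
        eqToHom (doubleCx_X_one B rfl).symm ≫ u ≫ Y.d 1 0 ≫ eqToHom (congrArg Y.X hn).symm
    else 0
  have hLf1 : Lf 1 = u := by simp [Lf]
  have hLf0 : Lf 0 = eqToHom (doubleCx_X_zero B rfl) ≫
      eqToHom (doubleCx_X_one B rfl).symm ≫ u ≫ Y.d 1 0 := by simp [Lf]
  have hLfz : ∀ n : ℤ, n ≠ 1 → n ≠ 0 → Lf n = 0 := by
    intro n h1 h0
    simp [Lf, h1, h0]
  let L : doubleCx B 0 ⟶ Y :=
    { f := Lf
      comm' := by
        intro i j hij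
        simp only [ComplexShape.down_Rel] at hij
        by_cases h1 : i = 1
        · have hj : j = 0 := by omega
          subst h1 hj
          rw [hLf1, hLf0, doubleCx_d_one_zero]
          simp
        · by_cases h0 : i = 0
          · have hj : j = -1 := by omega
            subst h0 hj
            rw [hLf0, hLfz (-1) (by omega) (by omega), doubleCx_d_ne B 0 (-1) (by omega)]
            simp
          · rw [hLfz i h1 h0, doubleCx_d_ne B i j (by omega), zero_comp, zero_comp] }
  refine ⟨L, HomologicalComplex.hom_ext _ _ fun n => ?_⟩
  rw [HomologicalComplex.comp_f]
  by_cases h1 : n = 1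
  · subst h1
    show Lf 1 ≫ ec.f 1 = fc.f 1
    rw [hLf1, hu]
  · by_cases h0 : n = 0
    · subst h0
      show Lf 0 ≫ ec.f 0 = fc.f 0
      show Lf 0 ≫ ec.f 0 = fc.f 0
      rw [hLf0]
      simp only [Category.assoc]
      rw [← ec.comm 1 0, ← Category.assoc u, hu, fc.comm 1 0, doubleCx_d_one_zero]
      simp
    · exact (doubleCx_X_isZero B n h1 h0).eq_of_src _ _

end DoubleCx


section Subproj

lemma inSubprojDomain_doubleCx {M : ModuleCat.{u} R} {N : Cx R}
    (hfac : ∀ φ : M ⟶ N.X 1, ∃ (B : ModuleCat.{u} R) (h : M ⟶ B) (g : B ⟶ N.X 1),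
      Projective B ∧ h ≫ g = φ) :
    InSubprojDomain (doubleCx M 0) N := by
  intro f
  obtain ⟨B, h, g, hB, hhg⟩ := hfac (eqToHom (doubleCx_X_one M rfl).symm ≫ f.f 1)
  let αf : ∀ n : ℤ, (doubleCx M 0).X n ⟶ (doubleCx B 0).X n := fun n =>
    if hn : n = 1 then
      eqToHom (doubleCx_X_one M hn) ≫ h ≫ eqToHom (doubleCx_X_one B hn).symm
    else if hn : n = 0 then
      eqToHom (doubleCx_X_zero M hn) ≫ h ≫ eqToHom (doubleCx_X_zero B hn).symm
    else 0
  have hα1 : αf 1 = eqToHom (doubleCx_X_one M rfl) ≫ h ≫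
      eqToHom (doubleCx_X_one B rfl).symm := by simp [αf]
  have hα0 : αf 0 = eqToHom (doubleCx_X_zero M rfl) ≫ h ≫
      eqToHom (doubleCx_X_zero B rfl).symm := by simp [αf]
  have hαz : ∀ n : ℤ, n ≠ 1 → n ≠ 0 → αf n = 0 := fun n h1 h0 => by simp [αf, h1, h0]
  let α : doubleCx M 0 ⟶ doubleCx B 0 :=
    { f := αf
      comm' := by
        intro i j hij
        simp only [ComplexShape.down_Rel] at hij
        by_cases h1 : i = 1
        · have hj : j = 0 := by omega
          subst h1 hj
          rw [hα1, hα0, doubleCx_d_one_zero M, doubleCx_d_one_zero B]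
          simp
        · by_cases h0 : i = 0
          · have hj : j = -1 := by omega
            subst h0 hj
            rw [hαz (-1) (by omega) (by omega), doubleCx_d_ne B 0 (-1) (by omega),
              doubleCx_d_ne M 0 (-1) (by omega)]
            simp
          · rw [hαz i h1 h0, doubleCx_d_ne M i j (by omega)]
            simp }
  let βf : ∀ n : ℤ, (doubleCx B 0).X n ⟶ N.X n := fun n =>
    if hn : n = 1 then
      eqToHom (doubleCx_X_one B hn) ≫ g ≫ eqToHom (congrArg N.X hn).symm
    else if hn : n = 0 then
      eqToHom (doubleCx_X_zero B hn) ≫ g ≫ N.d 1 0 ≫ eqToHom (congrArg N.X hn).symm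
    else 0
  have hβ1 : βf 1 = eqToHom (doubleCx_X_one B rfl) ≫ g := by simp [βf]
  have hβ0 : βf 0 = eqToHom (doubleCx_X_zero B rfl) ≫ g ≫ N.d 1 0 := by simp [βf]
  have hβz : ∀ n : ℤ, n ≠ 1 → n ≠ 0 → βf n = 0 := fun n h1 h0 => by simp [βf, h1, h0]
  let β : doubleCx B 0 ⟶ N :=
    { f := βf
      comm' := by
        intro i j hij
        simp only [ComplexShape.down_Rel] at hij
        by_cases h1 : i = 1
        · have hj : j = 0 := by omega
          subst h1 hj
          rw [hβ1, hβ0, doubleCx_d_one_zero B]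
          simp
        · by_cases h0 : i = 0
          · have hj : j = -1 := by omega
            subst h0 hj
            rw [hβ0, hβz (-1) (by omega) (by omega), doubleCx_d_ne B 0 (-1) (by omega)]
            simp
          · rw [hβz i h1 h0, doubleCx_d_ne B i j (by omega)]
            simp }
  refine ⟨doubleCx B 0, α, β, projective_doubleCx B hB,
    HomologicalComplex.hom_ext _ _ fun n => ?_⟩
  rw [HomologicalComplex.comp_f]
  by_cases h1 : n = 1
  · subst h1
    show αf 1 ≫ βf 1 = f.f 1
    rw [hα1, hβ1]
    simp only [Category.assoc, eqToHom_trans_assoc, eqToHom_refl, Category.id_comp]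
    rw [hhg]
    simp
  · by_cases h0 : n = 0
    · subst h0
      show αf 0 ≫ βf 0 = f.f 0
      rw [hα0, hβ0]
      simp only [Category.assoc, eqToHom_trans_assoc, eqToHom_refl, Category.id_comp]
      rw [reassoc_of% hhg, f.comm 1 0, doubleCx_d_one_zero M]
      simp
    · exact (doubleCx_X_isZero M n h1 h0).eq_of_src _ _

end Subproj

end Stmt17Aux

/-- Example 2.10. -/
theorem stmt17 (R : Type u) [Ring R]
    (hIF : ∀ E : ModuleCat.{u} R, Injective E → IsFlatMod E)
    (hVNR : ¬ ∀ a : R, ∃ b : R, a = a * b * a) :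
    ∃ M : ModuleCat.{u} R, Module.FinitePresentation R M ∧ ¬ Projective M ∧
      ∃ N : Cx R, IsExactCx N ∧ InSubprojDomain (doubleCx M 0) N ∧
        ¬ InSubprojDomain M (cyclesAt N 1) := by
  classical
  push_neg at hVNR
  obtain ⟨a, ha⟩ := hVNR
  let I : Submodule R R := Submodule.span R {a}
  let M : ModuleCat.{u} R := ModuleCat.of R (R ⧸ I)
  have hFP : Module.FinitePresentation R (R ⧸ I) :=
    Module.finitePresentation_of_surjective I.mkQ (Submodule.mkQ_surjective I)
      (by rw [Submodule.ker_mkQ]; exact Submodule.fg_span_singleton a)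
  have hFP' : Module.FinitePresentation R M := hFP
  have hNP : ¬ Projective M := by
    intro hP
    have hproj : Module.Projective R (R ⧸ I) := (IsProjective.iff_projective (R ⧸ I)).mpr hP
    obtain ⟨s, hs⟩ := Module.projective_lifting_property I.mkQ LinearMap.id
      (Submodule.mkQ_surjective I)
    set c : R := s (I.mkQ 1) with hc
    have h1c : I.mkQ c = I.mkQ 1 := by
      have := DFunLike.congr_fun hs (I.mkQ 1)
      rw [hc]
      simpa using this
    have hmem : c - 1 ∈ I := by
      have := (Submodule.Quotient.eq I).mp h1c
      simpa using this
    have hma : a ∈ I := Submodule.mem_span_singleton_self a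
    have hmk0 : I.mkQ a = 0 := (Submodule.Quotient.mk_eq_zero I).mpr hma
    have hac : a * c = 0 := by
      have h2 : I.mkQ a = a • I.mkQ 1 := by
        rw [← map_smul, smul_eq_mul, mul_one]
      have : a * c = s (I.mkQ a) := by
        rw [h2, map_smul, hc, smul_eq_mul]
      rw [this, hmk0, map_zero]
    obtain ⟨r, hr⟩ := Submodule.mem_span_singleton.mp hmem
    have hcr : c = 1 + r * a := by
      have : r * a = c - 1 := by rw [← smul_eq_mul, hr]
      rw [this]; abel
    have key : a + a * (r * a) = 0 := by
      have : a * (1 + r * a) = 0 := by rw [← hcr]; exact hac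
      calc a + a * (r * a) = a * (1 + r * a) := by rw [mul_add, mul_one]
      _ = 0 := this
    exact ha (-r) (by
      have : a = -(a * (r * a)) := eq_neg_of_add_eq_zero_left key
      conv_lhs => rw [this]
      rw [mul_neg, neg_mul, mul_assoc])
  let E : ModuleCat.{u} R := Injective.under M
  let i : M ⟶ E := Injective.ι M
  have hmono : Mono i := inferInstance
  let S : Submodule R E := LinearMap.range i.hom
  let Cq : ModuleCat.{u} R := ModuleCat.of R (↥E ⧸ S)
  let p : E ⟶ Cq := ModuleCat.ofHom S.mkQ
  have hip : i ≫ p = 0 := by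
    apply ModuleCat.hom_ext; apply LinearMap.ext; intro m
    exact (Submodule.Quotient.mk_eq_zero S).mpr ⟨m, rfl⟩
  have hrk : LinearMap.range i.hom = LinearMap.ker p.hom :=
    (Submodule.ker_mkQ S).symm
  let N : Cx R := Stmt17Aux.tripleCx M E Cq i p hip
  refine ⟨M, hFP', hNP, N, ?_, ?_, ?_⟩
  · exact Stmt17Aux.isExactCx_tripleCx M E Cq i p hip hrk (Submodule.mkQ_surjective S)
  · apply Stmt17Aux.inSubprojDomain_doubleCx
    intro φ
    have hNX1 : N.X 1 = E := Stmt17Aux.tObj_one M E Cq rfl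
    have hflat : IsFlatMod E := hIF E inferInstance
    let F : ModuleCat.{u} R := ModuleCat.of R (↥E →₀ R)
    let q : F ⟶ E := ModuleCat.ofHom (Finsupp.linearCombination R (id : ↥E → ↥E))
    have hq : Function.Surjective q := by
      have := Finsupp.linearCombination_surjective R (Function.surjective_id (α := ↥E))
      exact this
    obtain ⟨h, hh⟩ := hflat F q hq M hFP' (φ ≫ eqToHom hNX1)
    refine ⟨F, h, q ≫ eqToHom hNX1.symm, ?_, ?_⟩
    · exact ModuleCat.projective_of_free Finsupp.basisSingleOne
    · rw [← Category.assoc, hh]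
      simp
  · intro hsub
    obtain ⟨u, r, hur⟩ := Stmt17Aux.cycles_retract M E Cq i p hip hrk
    obtain ⟨P, g', h', hP, hfac⟩ := hsub u
    apply hNP
    constructor
    intro E' X' f' e' he'
    obtain ⟨l, hl⟩ := hP.factors (h' ≫ r ≫ f') e'
    refine ⟨g' ≫ l, ?_⟩
    rw [Category.assoc, hl]
    calc g' ≫ h' ≫ r ≫ f' = (g' ≫ h') ≫ r ≫ f' := by rw [Category.assoc]
    _ = u ≫ r ≫ f' := by rw [hfac]
    _ = (u ≫ r) ≫ f' := by rw [Category.assoc]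
    _ = f' := by rw [hur, Category.id_comp]
end
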